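/- arXiv:0906.4540 — 5 statements merged into one kernel-verified Lean document; each statement's English description precedes it below -/
import Mathlib

section
/- For every u in the Hardy space H^{1/2}_+ of the circle, one has ‖u‖_{L⁴}⁴ ≤ ‖u‖_{L²}² (‖u‖_{L²}² + ‖u‖_{H^{1/2}}²), i.e. E(u) ≤ Q(u)(Q(u) + 2M(u)), where Q(u)=‖u‖_{L²}², M(u)=Σ_{k≥0} k|û(k)|², E(u)=‖u‖_{L⁴}⁴. Equality holds if and only if u(z) = α/(1−pz) for some α ∈ ℂ and |p| < 1 (or u = 0). -/
noncomputable section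

open Complex Real

/-- The function on the circle with nonnegative Fourier coefficients `a`. -/
def hardyFun (a : ℕ → ℂ) : ℝ → ℂ :=
  fun θ => ∑' k : ℕ, a k * Complex.exp (k * θ * Complex.I)

/-- `Q(u) = ‖u‖_{L²}²`. -/
def Qc (a : ℕ → ℂ) : ℝ := ∑' k : ℕ, ‖a k‖ ^ 2

/-- `M(u) = Σ k |û(k)|²`, the homogeneous `H^{1/2}` seminorm squared. -/
def Mc (a : ℕ → ℂ) : ℝ := ∑' k : ℕ, (k : ℝ) * ‖a k‖ ^ 2

/-- `E(u) = ‖u‖_{L⁴}⁴` with respect to normalized Lebesgue measure on the circle. -/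
def Ec (a : ℕ → ℂ) : ℝ :=
  (∫ θ in (0 : ℝ)..(2 * π), ‖hardyFun a θ‖ ^ 4) / (2 * π)

/-!
Let `c = a ⋆ a` be the Taylor coefficients of `u²`. By Parseval, `E(u) = ∑ |c n|²`.
Cauchy–Schwarz on the `n + 1` terms of `c n = ∑_{k+l=n} a k * a l` gives
`|c n|² ≤ (n + 1) ∑_{k+l=n} |a k|² |a l|²`, and summing over `n` with `n + 1 = 1 + k + l`
yields exactly `Q² + 2QM`. Equality forces every Cauchy–Schwarz step to be sharp, i.e. `a k * a l`
depends only on `k + l`, which happens exactly for geometric sequences.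
-/

open Finset MeasureTheory ComplexConjugate

section LagrangeIdentity

variable {ι E : Type*} [NormedAddCommGroup E] [InnerProductSpace ℝ E]

theorem sum_sum_norm_sub_sq (s : Finset ι) (z : ι → E) :
    ∑ i ∈ s, ∑ j ∈ s, ‖z i - z j‖ ^ 2 =
      2 * (#s * ∑ i ∈ s, ‖z i‖ ^ 2 - ‖∑ i ∈ s, z i‖ ^ 2) := by
  simp_rw [norm_sub_sq_real, sum_add_distrib, sum_sub_distrib, ← mul_sum, ← inner_sum,
    ← sum_inner, real_inner_self_eq_norm_sq, sum_const, nsmul_eq_mul]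
  rw [← mul_sum]
  ring

theorem norm_sum_sq_le_card_mul_sum_norm_sq (s : Finset ι) (z : ι → E) :
    ‖∑ i ∈ s, z i‖ ^ 2 ≤ #s * ∑ i ∈ s, ‖z i‖ ^ 2 := by
  have h := sum_sum_norm_sub_sq s z
  have : 0 ≤ ∑ i ∈ s, ∑ j ∈ s, ‖z i - z j‖ ^ 2 := by positivity
  linarith

theorem norm_sum_sq_eq_card_mul_sum_norm_sq_iff (s : Finset ι) (z : ι → E) :
    ‖∑ i ∈ s, z i‖ ^ 2 = #s * ∑ i ∈ s, ‖z i‖ ^ 2 ↔ ∀ i ∈ s, ∀ j ∈ s, z i = z j := by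
  have h := sum_sum_norm_sub_sq s z
  calc _ ↔ ∑ i ∈ s, ∑ j ∈ s, ‖z i - z j‖ ^ 2 = 0 := by constructor <;> intro <;> linarith
    _ ↔ _ := by
      simp_rw [sum_eq_zero_iff_of_nonneg (fun _ _ => sum_nonneg fun _ _ => sq_nonneg _),
        sum_eq_zero_iff_of_nonneg (fun _ _ => sq_nonneg _)]
      simp [sub_eq_zero]

end LagrangeIdentity

theorem HasSum.eq_iff_of_le {ι : Type*} {f g : ι → ℝ} {a b : ℝ} (hf : HasSum f a) (hfg : f ≤ g)
    (hg : HasSum g b) : a = b ↔ f = g := by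
  refine ⟨fun hab => ?_, fun h => by subst h; exact hf.unique hg⟩
  by_contra hne
  obtain ⟨i, hi⟩ := Function.ne_iff.mp hne
  exact (hasSum_lt hfg ((hfg i).lt_of_ne hi) hf hg).ne hab

theorem hasSum_sum_antidiagonal_mul {f g : ℕ → ℝ} (hf : Summable f) (hg : Summable g) :
    HasSum (fun n => ∑ kl ∈ antidiagonal n, f kl.1 * g kl.2) ((∑' k, f k) * ∑' k, g k) := by
  rw [tsum_mul_tsum_eq_tsum_sum_antidiagonal_of_summable_norm hf.norm hg.norm]
  exact (summable_norm_sum_mul_antidiagonal_of_summable_norm hf.norm hg.norm).of_norm.hasSum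

theorem eq_mul_div_pow_of_mul_eq_mul {K : Type*} [Field K] {a : ℕ → K}
    (h : ∀ i j k l, i + j = k + l → a i * a j = a k * a l) (k : ℕ) :
    a k = a 0 * (a 1 / a 0) ^ k := by
  rcases eq_or_ne (a 0) 0 with h0 | h0
  -- `a k ^ 2 = a 0 * a (2 * k) = 0`, and the right-hand side vanishes too
  · simpa [h0] using h k k 0 (2 * k) (by ring)
  · induction k with
    | zero => simp
    | succ k ih =>
      rw [pow_succ, ← mul_assoc, ← ih]
      field_simp
      linear_combination h (k + 1) 0 k 1 rfl

theorem norm_lt_one_of_summable_mul_pow {α p : ℂ} (h : Summable fun k : ℕ => α * p ^ k)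
    (hα : α ≠ 0) : ‖p‖ < 1 :=
  summable_geometric_iff_norm_lt_one.mp ((h.mul_left α⁻¹).congr fun k => by field_simp)

theorem exists_geometric_iff_mul_eq_mul {a : ℕ → ℂ} (ha : Summable a) :
    (∃ α p : ℂ, ‖p‖ < 1 ∧ ∀ k, a k = α * p ^ k) ↔
      ∀ i j k l, i + j = k + l → a i * a j = a k * a l := by
  constructor
  · rintro ⟨α, p, -, hak⟩ i j k l h
    have hpow (m n : ℕ) : α * p ^ m * (α * p ^ n) = α ^ 2 * p ^ (m + n) := by ring
    rw [hak, hak, hak, hak, hpow, hpow, h]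
  · intro h
    refine ⟨a 0, a 1 / a 0, ?_, eq_mul_div_pow_of_mul_eq_mul h⟩
    rcases eq_or_ne (a 0) 0 with h0 | h0
    · simp [h0]
    · exact norm_lt_one_of_summable_mul_pow (ha.congr (eq_mul_div_pow_of_mul_eq_mul h)) h0

theorem hasSum_intervalIntegral_of_norm_le {ι E : Type*} [Countable ι] [NormedAddCommGroup E]
    [NormedSpace ℝ E] [CompleteSpace E] {F : ι → ℝ → E} {C : ι → ℝ} {a b : ℝ}
    (hF : ∀ i, Continuous (F i)) (hC : Summable C) (hFC : ∀ i t, ‖F i t‖ ≤ C i) :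
    HasSum (fun i => ∫ t in a..b, F i t) (∫ t in a..b, ∑' i, F i t) :=
  intervalIntegral.hasSum_integral_of_dominated_convergence (fun i _ => C i)
    (fun i => (hF i).aestronglyMeasurable) (fun i => .of_forall fun t _ => hFC i t)
    (.of_forall fun _ _ => hC) intervalIntegrable_const
    (.of_forall fun t _ => (hC.of_norm_bounded (hFC · t)).hasSum)

theorem norm_exp_natCast_mul_I (k : ℕ) (θ : ℝ) : ‖exp (k * θ * I)‖ = 1 := by
  simpa using norm_exp_ofReal_mul_I (k * θ)

theorem integral_exp_mul_conj_exp (m n : ℕ) :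
    ∫ θ in (0 : ℝ)..2 * π, exp (m * θ * I) * conj (exp (n * θ * I)) =
      if m = n then (2 * π : ℂ) else 0 := by
  have hexp (θ : ℝ) : exp (m * θ * I) * conj (exp (n * θ * I)) = exp ((m - n) * I * θ) := by
    rw [← exp_conj, ← Complex.exp_add]
    simp only [map_mul, conj_natCast, conj_ofReal, conj_I]
    ring_nf
  simp_rw [hexp]
  split_ifs with h
  · simp [h]
  · have hmn : ((m : ℂ) - n) * I ≠ 0 :=
      mul_ne_zero (sub_ne_zero.mpr (Nat.cast_injective.ne h)) I_ne_zero
    have hper : ((m : ℂ) - n) * I * (2 * π) = ((m - n : ℤ) : ℂ) * (2 * π * I) := by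
      push_cast; ring
    rw [integral_exp_mul_complex hmn]
    push_cast
    rw [hper, exp_int_mul_two_pi_mul_I]
    simp

section HardyFun

variable {a b : ℕ → ℂ}

theorem norm_hardyFun_le (hb : Summable (‖b ·‖)) (θ : ℝ) : ‖hardyFun b θ‖ ≤ ∑' k, ‖b k‖ :=
  (norm_tsum_le_tsum_norm (by simpa [norm_exp_natCast_mul_I] using hb)).trans_eq
    (by simp [norm_exp_natCast_mul_I])

theorem continuous_hardyFun (hb : Summable (‖b ·‖)) : Continuous (hardyFun b) :=
  continuous_tsum (fun k => by fun_prop) hb fun k θ => by simp [norm_exp_natCast_mul_I]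

theorem integral_hardyFun_mul_conj_exp (hb : Summable (‖b ·‖)) (n : ℕ) :
    ∫ θ in (0 : ℝ)..2 * π, hardyFun b θ * conj (exp (n * θ * I)) = 2 * π * b n := by
  have hsum := hasSum_intervalIntegral_of_norm_le (a := 0) (b := 2 * π)
    (F := fun k θ => b k * (exp (k * θ * I) * conj (exp (n * θ * I)))) (fun k => by fun_prop) hb
    (fun k θ => by simp [norm_exp_natCast_mul_I])
  have hcoef (k : ℕ) : ∫ θ in (0 : ℝ)..2 * π, b k * (exp (k * θ * I) * conj (exp (n * θ * I))) =
      if k = n then 2 * π * b n else 0 := by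
    rw [intervalIntegral.integral_const_mul, integral_exp_mul_conj_exp]
    split_ifs with h <;> simp [h, mul_comm]
  simp only [hcoef] at hsum
  rw [← hsum.unique (hasSum_ite_eq n _)]
  congr 1 with θ
  rw [hardyFun, ← tsum_mul_right]
  exact tsum_congr fun k => mul_assoc _ _ _

theorem integral_norm_hardyFun_sq (hb : Summable (‖b ·‖)) :
    ∫ θ in (0 : ℝ)..2 * π, ‖hardyFun b θ‖ ^ 2 = 2 * π * ∑' n, ‖b n‖ ^ 2 := by
  have hsum := hasSum_intervalIntegral_of_norm_le (a := 0) (b := 2 * π)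
    (F := fun k θ => conj (b k) * (hardyFun b θ * conj (exp (k * θ * I))))
    (fun k => by have := continuous_hardyFun hb; fun_prop) (hb.mul_right (∑' k, ‖b k‖))
    (fun k θ => by simpa [norm_exp_natCast_mul_I] using
      mul_le_mul_of_nonneg_left (norm_hardyFun_le hb θ) (norm_nonneg (b k)))
  have hcoef (k : ℕ) :
      ∫ θ in (0 : ℝ)..2 * π, conj (b k) * (hardyFun b θ * conj (exp (k * θ * I))) =
        ((2 * π * ‖b k‖ ^ 2 : ℝ) : ℂ) := by
    rw [intervalIntegral.integral_const_mul, integral_hardyFun_mul_conj_exp hb, mul_left_comm,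
      conj_mul']
    push_cast
    rfl
  have hnorm (θ : ℝ) : ((‖hardyFun b θ‖ ^ 2 : ℝ) : ℂ) =
      ∑' k, conj (b k) * (hardyFun b θ * conj (exp (k * θ * I))) := by
    rw [ofReal_pow, ← mul_conj']
    nth_rw 2 [hardyFun]
    rw [conj_tsum, ← tsum_mul_left]
    exact tsum_congr fun k => by rw [map_mul]; ring
  simp only [hcoef] at hsum
  apply ofReal_injective
  rw [← intervalIntegral.integral_ofReal]
  simp_rw [hnorm]
  rw [← hsum.tsum_eq, ← ofReal_tsum, tsum_mul_left]

def cauchyProduct (a b : ℕ → ℂ) (n : ℕ) : ℂ := ∑ kl ∈ antidiagonal n, a kl.1 * b kl.2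

theorem hardyFun_mul (ha : Summable (‖a ·‖)) (hb : Summable (‖b ·‖)) (θ : ℝ) :
    hardyFun a θ * hardyFun b θ = hardyFun (cauchyProduct a b) θ := by
  have hsum {c : ℕ → ℂ} (hc : Summable (‖c ·‖)) :
      Summable fun k : ℕ => ‖c k * exp (k * θ * I)‖ := by
    simpa [norm_exp_natCast_mul_I] using hc
  rw [hardyFun, hardyFun, tsum_mul_tsum_eq_tsum_sum_antidiagonal_of_summable_norm (hsum ha)
    (hsum hb)]
  refine tsum_congr fun n => ?_
  rw [cauchyProduct, sum_mul]
  refine sum_congr rfl fun kl hkl => ?_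
  rw [← mem_antidiagonal.mp hkl]
  push_cast
  rw [show ((kl.1 : ℂ) + kl.2) * θ * I = kl.1 * θ * I + kl.2 * θ * I by ring, Complex.exp_add]
  ring

theorem Ec_eq_tsum_norm_cauchyProduct_sq (ha : Summable (‖a ·‖)) :
    Ec a = ∑' n, ‖cauchyProduct a a n‖ ^ 2 := by
  have hnorm (θ : ℝ) : ‖hardyFun a θ‖ ^ 4 = ‖hardyFun (cauchyProduct a a) θ‖ ^ 2 := by
    rw [← hardyFun_mul ha ha, norm_mul]
    ring
  rw [Ec]
  simp_rw [hnorm]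
  rw [integral_norm_hardyFun_sq (b := cauchyProduct a a)
    (summable_norm_sum_mul_antidiagonal_of_summable_norm ha ha)]
  field_simp

theorem norm_cauchyProduct_self_sq_le (a : ℕ → ℂ) (n : ℕ) :
    ‖cauchyProduct a a n‖ ^ 2 ≤ (n + 1) * ∑ kl ∈ antidiagonal n, ‖a kl.1‖ ^ 2 * ‖a kl.2‖ ^ 2 := by
  simpa [cauchyProduct, norm_mul, mul_pow] using
    norm_sum_sq_le_card_mul_sum_norm_sq (antidiagonal n) fun kl => a kl.1 * a kl.2

theorem norm_cauchyProduct_self_sq_eq_iff (a : ℕ → ℂ) (n : ℕ) :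
    ‖cauchyProduct a a n‖ ^ 2 = (n + 1) * ∑ kl ∈ antidiagonal n, ‖a kl.1‖ ^ 2 * ‖a kl.2‖ ^ 2 ↔
      ∀ kl ∈ antidiagonal n, ∀ kl' ∈ antidiagonal n, a kl.1 * a kl.2 = a kl'.1 * a kl'.2 := by
  simpa [cauchyProduct, norm_mul, mul_pow] using
    norm_sum_sq_eq_card_mul_sum_norm_sq_iff (antidiagonal n) fun kl => a kl.1 * a kl.2

theorem summable_norm_sq_of_summable_one_add_mul
    (ha : Summable fun k : ℕ => (1 + (k : ℝ)) * ‖a k‖ ^ 2) : Summable fun k => ‖a k‖ ^ 2 :=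
  ha.of_nonneg_of_le (fun _ => by positivity) fun k => by nlinarith [sq_nonneg ‖a k‖]

theorem Qc_mul_Qc_add_two_mul_Mc_pos (ha : Summable fun k : ℕ => (1 + (k : ℝ)) * ‖a k‖ ^ 2)
    {k : ℕ} (hk : a k ≠ 0) : 0 < Qc a * (Qc a + 2 * Mc a) := by
  have hQ : 0 < Qc a := (summable_norm_sq_of_summable_one_add_mul ha).tsum_pos
    (fun _ => by positivity) k (pow_pos (norm_pos_iff.mpr hk) 2)
  have hM : 0 ≤ Mc a := tsum_nonneg fun k => by positivity
  exact mul_pos hQ (by linarith)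

theorem hasSum_Qc_mul_Qc_add_two_mul_Mc
    (ha : Summable fun k : ℕ => (1 + (k : ℝ)) * ‖a k‖ ^ 2) :
    HasSum (fun n : ℕ => (n + 1) * ∑ kl ∈ antidiagonal n, ‖a kl.1‖ ^ 2 * ‖a kl.2‖ ^ 2)
      (Qc a * (Qc a + 2 * Mc a)) := by
  have hQ := summable_norm_sq_of_summable_one_add_mul ha
  have hM : Summable fun k : ℕ => (k : ℝ) * ‖a k‖ ^ 2 :=
    ha.of_nonneg_of_le (fun _ => by positivity) fun k => by nlinarith [sq_nonneg ‖a k‖]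
  have h := ((hasSum_sum_antidiagonal_mul hQ hQ).add (hasSum_sum_antidiagonal_mul hM hQ)).add
    (hasSum_sum_antidiagonal_mul hQ hM)
  convert h using 1
  · ext n
    simp_rw [mul_sum, ← sum_add_distrib]
    refine sum_congr rfl fun kl hkl => ?_
    rw [← mem_antidiagonal.mp hkl]
    push_cast
    ring
  · rw [Qc, Mc]
    ring

theorem hardyFun_eq_zero_of_not_summable (ha : ¬Summable (‖a ·‖)) : hardyFun a = 0 := by
  ext θ
  refine tsum_eq_zero_of_not_summable fun hsum => ha ?_
  simpa [norm_exp_natCast_mul_I] using hsum.norm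

end HardyFun

/-- For every `u ∈ H^{1/2}_+`, `E(u) ≤ Q(u)(Q(u) + 2M(u))`, with equality
iff `u(z) = α/(1-pz)` for some `α ∈ ℂ`, `|p| < 1` (the case `α = 0` giving `u = 0`). -/
theorem stmt1 (a : ℕ → ℂ) (ha : Summable fun k : ℕ => (1 + (k : ℝ)) * ‖a k‖ ^ 2) :
    Ec a ≤ Qc a * (Qc a + 2 * Mc a) ∧
      (Ec a = Qc a * (Qc a + 2 * Mc a) ↔
        ∃ (α p : ℂ), ‖p‖ < 1 ∧ ∀ k : ℕ, a k = α * p ^ k) := by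
  have hRHS := hasSum_Qc_mul_Qc_add_two_mul_Mc ha
  by_cases hA : Summable (‖a ·‖)
  · have hle := norm_cauchyProduct_self_sq_le a
    have hE : HasSum (fun n => ‖cauchyProduct a a n‖ ^ 2) (Ec a) := by
      rw [Ec_eq_tsum_norm_cauchyProduct_sq hA]
      exact (hRHS.summable.of_nonneg_of_le (fun _ => by positivity) hle).hasSum
    refine ⟨hasSum_le hle hE hRHS, ?_⟩
    rw [hE.eq_iff_of_le hle hRHS, funext_iff, exists_geometric_iff_mul_eq_mul hA.of_norm]
    simp only [norm_cauchyProduct_self_sq_eq_iff, HasAntidiagonal.mem_antidiagonal, Prod.forall]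
    exact ⟨fun h i j k l hijkl => h _ i j rfl k l hijkl.symm,
      fun h n i j hij k l hkl => h i j k l (hij.trans hkl.symm)⟩
  -- the series defining `hardyFun a` diverges, so `Ec a` is the junk value `0`
  · have hE : Ec a = 0 := by simp [Ec, hardyFun_eq_zero_of_not_summable hA]
    obtain ⟨k, hk⟩ : ∃ k, a k ≠ 0 := by
      by_contra! h
      exact hA (by simp [h])
    have hpos := Qc_mul_Qc_add_two_mul_Mc_pos ha hk
    refine ⟨hE ▸ hpos.le, iff_of_false (hE ▸ hpos.ne) ?_⟩
    rintro ⟨α, p, hp, hak⟩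
    exact hA (((summable_geometric_of_lt_one (norm_nonneg p) hp).mul_left ‖α‖).congr fun k => by
      simp [hak, norm_pow])
end
end

section
/- For u sufficiently smooth in the Hardy space (e.g. u ∈ H^s_+ with s > 1/2), the following operator identity holds on L²_+: H_{Π(|u|²u)} = T_{|u|²} H_u + H_u T_{|u|²} − H_u³, where T_b(h)=Π(bh) is the Toeplitz operator and H_u(h)=Π(u·conj(h)) the Hankel operator. -/
noncomputable section

open scoped ComplexConjugate

/-- Hankel operator of symbol `u` on Fourier coefficients:
`(H_u h)^(k) = Σ_{ℓ≥0} û(k+ℓ) conj(ĥ(ℓ))`. -/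
def hankel (u : ℕ → ℂ) (h : ℕ → ℂ) : ℕ → ℂ :=
  fun k => ∑' ℓ : ℕ, u (k + ℓ) * conj (h ℓ)

/-- The Fourier coefficients (indexed by `ℤ`) of `|u|²` for `u` with nonnegative Fourier
coefficients `a` : for `n ≥ 0`, `(|u|²)^(n) = Σ_{ℓ≥0} û(ℓ+n) conj(û(ℓ))`, and
`(|u|²)^(-n) = conj((|u|²)^(n))`. -/
def sqModCoeff (a : ℕ → ℂ) : ℤ → ℂ :=
  fun n =>
    if 0 ≤ n then ∑' ℓ : ℕ, a (ℓ + n.toNat) * conj (a ℓ)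
    else conj (∑' ℓ : ℕ, a (ℓ + (-n).toNat) * conj (a ℓ))

/-- The Toeplitz operator `T_{|u|²}` on Fourier coefficients:
`(T_{|u|²} h)^(k) = Σ_{m≥0} (|u|²)^(k-m) ĥ(m)`. -/
def toepSq (a : ℕ → ℂ) (h : ℕ → ℂ) : ℕ → ℂ :=
  fun k => ∑' m : ℕ, sqModCoeff a ((k : ℤ) - (m : ℤ)) * h m

/-- Fourier coefficients of `Π(|u|²u)`: `(Π(|u|²u))^(k) = Σ_{m≥0} (|u|²)^(k-m) û(m)`. -/
def szegoCubic (a : ℕ → ℂ) : ℕ → ℂ := toepSq a a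

/-!
Everything is computed on Fourier coefficients. Writing `x = (l, m, p, q)`, each side of the
identity applied to `h` at index `k` expands into the same quadruple series of
`û(p) û(m) conj(û(q)) conj(ĥ(l))` over `p + m = q + l + k` (`cubicTerm`): `H_{Π(|u|²u)}` sums
over all quadruples, `T_{|u|²} H_u` over `l ≤ m`, `H_u T_{|u|²}` over `k ≤ p`, and `H_u³` over
both. On the constraint `l ≤ m` or `k ≤ p` always holds, so the identity is inclusion–exclusion.
The series converge absolutely, which justifies every reordering, because `s > 1/2` puts `û` in
`ℓ¹` and `ĥ ∈ ℓ²` is bounded.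
-/

open Function Set

theorem summable_norm_of_summable_rpow_mul_sq {E : Type*} [SeminormedAddCommGroup E]
    {a : ℕ → E} {s : ℝ} (hs : 1 / 2 < s)
    (ha : Summable fun k : ℕ => (1 + (k : ℝ)) ^ (2 * s) * ‖a k‖ ^ 2) :
    Summable fun k => ‖a k‖ := by
  have hweight : Summable fun k : ℕ => (1 + (k : ℝ)) ^ (-(2 * s)) := by
    refine ((summable_nat_add_iff 1).mpr
      (Real.summable_nat_rpow.mpr (by linarith : -(2 * s) < -1))).congr fun k => ?_
    push_cast
    rw [add_comm]
  refine .of_nonneg_of_le (fun _ => norm_nonneg _) (fun k => ?_) (hweight.add ha)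
  have hk : (0 : ℝ) < 1 + k := by positivity
  have hsq : (1 + (k : ℝ)) ^ (2 * s) = ((1 + (k : ℝ)) ^ s) ^ 2 := by
    rw [mul_comm]; exact_mod_cast Real.rpow_mul_natCast hk.le s 2
  rw [Real.rpow_neg hk.le, hsq]
  set w := (1 + (k : ℝ)) ^ s
  have hw : w ≠ 0 := (Real.rpow_pos_of_pos hk s).ne'
  -- `‖a k‖ = w⁻¹ * (w * ‖a k‖) ≤ w⁻² + w² ‖a k‖²`
  have hamgm := two_mul_le_add_sq w⁻¹ (w * ‖a k‖)
  rw [mul_assoc, inv_mul_cancel_left₀ hw, inv_pow, mul_pow] at hamgm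
  linarith [norm_nonneg (a k)]

theorem norm_le_sqrt_tsum_sq {ι E : Type*} [SeminormedAddCommGroup E] {h : ι → E}
    (hh : Summable fun i => ‖h i‖ ^ 2) (i : ι) : ‖h i‖ ≤ √(∑' j, ‖h j‖ ^ 2) :=
  Real.le_sqrt_of_sq_le (hh.le_tsum i fun _ _ => sq_nonneg _)

theorem summable_of_norm_comp_le {ι κ E : Type*} [NormedAddCommGroup E] [CompleteSpace E]
    {f : ι → E} {e : κ → ι} (he : Injective e) (hf : support f ⊆ range e) {g : κ → ℝ}
    (hg : Summable g) (hfg : ∀ y, ‖f (e y)‖ ≤ g y) : Summable f :=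
  (he.summable_iff fun _ hx => notMem_support.mp fun h => hx (hf h)).mp (hg.of_norm_bounded hfg)

theorem sqModCoeff_eq_tsum (a : ℕ → ℂ) (n : ℤ) :
    sqModCoeff a n =
      ∑' pq : ℕ × ℕ, if (pq.1 : ℤ) = pq.2 + n then a pq.1 * conj (a pq.2) else 0 := by
  rcases le_or_gt 0 n with hn | hn
  · have he : Injective fun q : ℕ => (q + n.toNat, q) := fun _ _ h => congrArg Prod.snd h
    rw [sqModCoeff, if_pos hn, ← he.tsum_eq]
    · exact tsum_congr fun q => by rw [if_pos (by push_cast; omega)]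
    · rintro ⟨p, q⟩ hpq
      have := (ite_ne_right_iff.mp hpq).1
      exact ⟨q, Prod.ext (by simp only; omega) rfl⟩
  · have he : Injective fun p : ℕ => (p, p + (-n).toNat) := fun _ _ h => congrArg Prod.fst h
    rw [sqModCoeff, if_neg hn.not_ge, Complex.conj_tsum, ← he.tsum_eq]
    · refine tsum_congr fun p => ?_
      rw [if_pos (by push_cast; omega), map_mul, Complex.conj_conj, mul_comm]
    · rintro ⟨p, q⟩ hpq
      have := (ite_ne_right_iff.mp hpq).1
      exact ⟨p, Prod.ext rfl (by simp only; omega)⟩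

section

variable {a b : ℕ → ℂ} {C : ℝ} (ha : Summable fun n => ‖a n‖) (hb : ∀ n, ‖b n‖ ≤ C)
include ha hb

theorem toepSq_eq_tsum (n : ℕ) :
    toepSq a b n = ∑' t : ℕ × ℕ × ℕ,
      if t.2.1 + t.1 = t.2.2 + n then a t.2.1 * conj (a t.2.2) * b t.1 else 0 := by
  have hsum : Summable fun t : ℕ × ℕ × ℕ =>
      if t.2.1 + t.1 = t.2.2 + n then a t.2.1 * conj (a t.2.2) * b t.1 else 0 := by
    refine summable_of_norm_comp_le (e := fun pq : ℕ × ℕ => (pq.2 + n - pq.1, pq.1, pq.2))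
      (fun _ _ h => Prod.ext (congrArg (·.2.1) h) (congrArg (·.2.2) h)) ?_
      ((ha.mul_of_nonneg ha (fun _ => norm_nonneg _) (fun _ => norm_nonneg _)).mul_right C) ?_
    · rintro ⟨m, p, q⟩ ht
      have := (ite_ne_right_iff.mp ht).1
      exact ⟨(p, q), Prod.ext (by dsimp only at this ⊢; omega) rfl⟩
    · rintro ⟨p, q⟩
      split_ifs
      · simp only [norm_mul, Complex.norm_conj]
        exact mul_le_mul_of_nonneg_left (hb _) (by positivity)
      · simpa using mul_nonneg (norm_nonneg (a p * a q)) ((norm_nonneg _).trans (hb 0))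
  rw [hsum.tsum_prod]
  refine tsum_congr fun m => ?_
  rw [sqModCoeff_eq_tsum, ← tsum_mul_right]
  refine tsum_congr fun ⟨p, q⟩ => ?_
  rw [ite_mul, zero_mul]
  exact if_congr (by dsimp only; omega) rfl rfl

theorem norm_hankel_le (m : ℕ) : ‖hankel a b m‖ ≤ (∑' n, ‖a n‖) * C := by
  have hshift : Summable fun l => ‖a (m + l)‖ := ha.comp_injective (add_right_injective m)
  refine tsum_of_norm_bounded (hshift.hasSum.mul_right C) (fun l => ?_) |>.trans ?_
  · rw [norm_mul, Complex.norm_conj]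
    exact mul_le_mul_of_nonneg_left (hb l) (norm_nonneg _)
  · exact mul_le_mul_of_nonneg_right
      (tsum_comp_le_tsum_of_inj ha (fun _ => norm_nonneg _) (add_right_injective m))
      ((norm_nonneg _).trans (hb 0))

end

def cubicTerm (a h : ℕ → ℂ) (k : ℕ) (x : ℕ × ℕ × ℕ × ℕ) : ℂ :=
  if x.2.2.1 + x.2.1 = x.2.2.2 + x.1 + k then
    a x.2.2.1 * a x.2.1 * conj (a x.2.2.2) * conj (h x.1) else 0

theorem support_cubicTerm_subset (a h : ℕ → ℂ) (k : ℕ) :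
    support (cubicTerm a h k) ⊆ {x | x.1 ≤ x.2.1} ∪ {x | k ≤ x.2.2.1} := by
  rintro ⟨l, m, p, q⟩ hx
  have := (ite_ne_right_iff.mp hx).1
  dsimp only at this
  change l ≤ m ∨ k ≤ p
  omega

theorem cubicTerm_eq_indicator_add_indicator_sub (a h : ℕ → ℂ) (k : ℕ) :
    cubicTerm a h k =
      {x | x.1 ≤ x.2.1}.indicator (cubicTerm a h k) + {x | k ≤ x.2.2.1}.indicator (cubicTerm a h k)
        - ({x | x.1 ≤ x.2.1} ∩ {x | k ≤ x.2.2.1}).indicator (cubicTerm a h k) := by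
  rw [← indicator_union_add_inter, add_sub_cancel_right,
    indicator_eq_self.mpr (support_cubicTerm_subset a h k)]

section

variable {a h : ℕ → ℂ} {C : ℝ} (ha : Summable fun n => ‖a n‖) (hh : ∀ n, ‖h n‖ ≤ C) (k : ℕ)
include ha hh

theorem summable_cubicTerm : Summable (cubicTerm a h k) := by
  have hg : Summable fun t : ℕ × ℕ × ℕ => ‖a t.1‖ * (‖a t.2.1‖ * ‖a t.2.2‖) * C :=
    (ha.mul_of_nonneg (ha.mul_of_nonneg ha (fun _ => norm_nonneg _) (fun _ => norm_nonneg _))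
      (fun _ => norm_nonneg _) (fun _ => by positivity)).mul_right C
  refine summable_of_norm_comp_le (e := fun t : ℕ × ℕ × ℕ => (t.2.1 + t.1 - (t.2.2 + k), t))
    (fun _ _ h => congrArg Prod.snd h) ?_ hg ?_
  · rintro ⟨l, m, p, q⟩ hx
    have := (ite_ne_right_iff.mp hx).1
    dsimp only at this
    exact ⟨(m, p, q), Prod.ext (by dsimp only; omega) rfl⟩
  · rintro ⟨m, p, q⟩
    dsimp only [cubicTerm]
    split_ifs
    · simp only [norm_mul, Complex.norm_conj]
      calc ‖a p‖ * ‖a m‖ * ‖a q‖ * ‖h (p + m - (q + k))‖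
          = ‖a m‖ * (‖a p‖ * ‖a q‖) * ‖h (p + m - (q + k))‖ := by ring
        _ ≤ ‖a m‖ * (‖a p‖ * ‖a q‖) * C := by gcongr; exact hh _
    · simpa using mul_nonneg (norm_nonneg (a m * (a p * a q))) ((norm_nonneg _).trans (hh 0))

theorem hankel_szegoCubic_eq_tsum : hankel (szegoCubic a) h k = ∑' x, cubicTerm a h k x := by
  rw [(summable_cubicTerm ha hh k).tsum_prod]
  refine tsum_congr fun l => ?_
  rw [szegoCubic, toepSq_eq_tsum ha (fun n => ha.le_tsum n fun _ _ => norm_nonneg _),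
    ← tsum_mul_right]
  refine tsum_congr fun ⟨m, p, q⟩ => ?_
  rw [ite_mul, zero_mul, cubicTerm]
  exact if_congr (by dsimp only; omega) (by ring) rfl

theorem toepSq_hankel_eq_tsum :
    toepSq a (hankel a h) k = ∑' x, {x | x.1 ≤ x.2.1}.indicator (cubicTerm a h k) x := by
  set e : (ℕ × ℕ × ℕ) × ℕ → ℕ × ℕ × ℕ × ℕ := fun y => (y.2, y.1.1 + y.2, y.1.2)
  have he : Injective e := by
    rintro ⟨⟨m, p, q⟩, l⟩ ⟨⟨m', p', q'⟩, l'⟩ h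
    simp only [e, Prod.mk.injEq] at h ⊢
    omega
  have hrange : support ({x | x.1 ≤ x.2.1}.indicator (cubicTerm a h k)) ⊆ range e := by
    rintro ⟨l, m, p, q⟩ hx
    have : (l, m, p, q) ∈ {x : ℕ × ℕ × ℕ × ℕ | x.1 ≤ x.2.1} := support_indicator_subset hx
    change l ≤ m at this
    exact ⟨((m - l, p, q), l), by simp [e, Nat.sub_add_cancel this]⟩
  have hsum : Summable fun y => {x | x.1 ≤ x.2.1}.indicator (cubicTerm a h k) (e y) :=
    ((summable_cubicTerm ha hh k).indicator _).comp_injective he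
  rw [toepSq_eq_tsum ha (norm_hankel_le ha hh), ← he.tsum_eq hrange, hsum.tsum_prod]
  refine tsum_congr fun ⟨m, p, q⟩ => ?_
  have hterm : ∀ l, {x : ℕ × ℕ × ℕ × ℕ | x.1 ≤ x.2.1}.indicator (cubicTerm a h k) (l, m + l, p, q)
      = if p + m = q + k then a p * conj (a q) * (a (m + l) * conj (h l)) else 0 := fun l => by
    rw [indicator_apply, if_pos (by simp), cubicTerm]
    exact if_congr (by dsimp only; omega) (by ring) rfl
  simp only [e, hterm, hankel]
  split_ifs <;> simp [tsum_mul_left]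

theorem hankel_toepSq_eq_tsum :
    hankel a (toepSq a h) k = ∑' x, {x | k ≤ x.2.2.1}.indicator (cubicTerm a h k) x := by
  set e : ℕ × ℕ × ℕ × ℕ → ℕ × ℕ × ℕ × ℕ := fun y => (y.2.1, y.2.2.2, k + y.1, y.2.2.1)
  have he : Injective e := by
    rintro ⟨l, m, p, q⟩ ⟨l', m', p', q'⟩ h
    simp only [e, Prod.mk.injEq] at h ⊢
    omega
  have hrange : support ({x | k ≤ x.2.2.1}.indicator (cubicTerm a h k)) ⊆ range e := by
    rintro ⟨l, m, p, q⟩ hx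
    have : (l, m, p, q) ∈ {x : ℕ × ℕ × ℕ × ℕ | k ≤ x.2.2.1} := support_indicator_subset hx
    change k ≤ p at this
    exact ⟨(p - k, l, q, m), by simp [e, Nat.add_sub_cancel' this]⟩
  have hsum : Summable fun y => {x | k ≤ x.2.2.1}.indicator (cubicTerm a h k) (e y) :=
    ((summable_cubicTerm ha hh k).indicator _).comp_injective he
  rw [← he.tsum_eq hrange, hsum.tsum_prod]
  refine tsum_congr fun l => ?_
  rw [toepSq_eq_tsum ha hh, Complex.conj_tsum, ← tsum_mul_left]
  refine tsum_congr fun ⟨m, p, q⟩ => ?_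
  rw [indicator_of_mem (by simp [e]), cubicTerm]
  dsimp only [e]
  by_cases hc : p + m = q + l
  · rw [if_pos hc, if_pos (by omega), map_mul, map_mul, Complex.conj_conj]
    ring
  · rw [if_neg hc, if_neg (by omega), map_zero, mul_zero]

theorem hankel_hankel_hankel_eq_tsum :
    hankel a (hankel a (hankel a h)) k =
      ∑' x, ({x | x.1 ≤ x.2.1} ∩ {x | k ≤ x.2.2.1}).indicator (cubicTerm a h k) x := by
  set e : ℕ × ℕ × ℕ → ℕ × ℕ × ℕ × ℕ := fun y => (y.2.2, y.2.1 + y.2.2, k + y.1, y.1 + y.2.1)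
  have he : Injective e := by
    rintro ⟨l₁, l₂, l₃⟩ ⟨l₁', l₂', l₃'⟩ h
    simp only [e, Prod.mk.injEq] at h ⊢
    omega
  have hrange : support (({x | x.1 ≤ x.2.1} ∩ {x | k ≤ x.2.2.1}).indicator (cubicTerm a h k))
      ⊆ range e := by
    rintro ⟨l, m, p, q⟩ hx
    rw [support_indicator] at hx
    obtain ⟨⟨hlm, hkp⟩, hx⟩ := hx
    have := (ite_ne_right_iff.mp hx).1
    change l ≤ m at hlm
    change k ≤ p at hkp
    dsimp only at this
    exact ⟨(p - k, m - l, l), by simp only [e, Prod.mk.injEq, true_and]; omega⟩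
  have hsum : Summable fun y =>
      ({x | x.1 ≤ x.2.1} ∩ {x | k ≤ x.2.2.1}).indicator (cubicTerm a h k) (e y) :=
    ((summable_cubicTerm ha hh k).indicator _).comp_injective he
  rw [← he.tsum_eq hrange, hsum.tsum_prod]
  simp only [hankel]
  refine tsum_congr fun l₁ => ?_
  rw [(hsum.prod_factor l₁).tsum_prod, Complex.conj_tsum, ← tsum_mul_left]
  refine tsum_congr fun l₂ => ?_
  rw [map_mul, Complex.conj_conj, ← tsum_mul_left, ← tsum_mul_left]
  refine tsum_congr fun l₃ => ?_
  rw [indicator_of_mem (by simp [e]), cubicTerm, if_pos (by dsimp only [e]; omega)]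
  ring

end

/-- For `u ∈ H^s_+`, `s > 1/2`, the operator identity
`H_{Π(|u|²u)} = T_{|u|²} H_u + H_u T_{|u|²} − H_u³` holds on `L²_+`. -/
theorem stmt3 (a : ℕ → ℂ)
    (ha : ∃ s : ℝ, 1 / 2 < s ∧ Summable fun k : ℕ => (1 + (k : ℝ)) ^ (2 * s) * ‖a k‖ ^ 2)
    (h : ℕ → ℂ) (hh : Summable fun k : ℕ => ‖h k‖ ^ 2) :
    ∀ k : ℕ,
      hankel (szegoCubic a) h k =
        toepSq a (hankel a h) k + hankel a (toepSq a h) k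
          - hankel a (hankel a (hankel a h)) k := by
  obtain ⟨s, hs, ha⟩ := ha
  have ha₁ := summable_norm_of_summable_rpow_mul_sq hs ha
  have hh_le := norm_le_sqrt_tsum_sq hh
  intro k
  have hF := summable_cubicTerm ha₁ hh_le k
  rw [hankel_szegoCubic_eq_tsum ha₁ hh_le, toepSq_hankel_eq_tsum ha₁ hh_le,
    hankel_toepSq_eq_tsum ha₁ hh_le, hankel_hankel_hankel_eq_tsum ha₁ hh_le,
    ← (hF.indicator _).tsum_add (hF.indicator _),
    ← ((hF.indicator _).add (hF.indicator _)).tsum_sub (hF.indicator _)]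
  exact tsum_congr fun x => congr_fun (cubicTerm_eq_indicator_add_indicator_sub a h k) x
end
end

section
/- Kronecker's theorem: for u in BMO_+(S¹) (so that the Hankel operator H_u is bounded on L²_+), H_u has complex rank N if and only if u is a rational function of the form A(z)/B(z) with A ∈ ℂ_{N−1}[z], B ∈ ℂ_N[z], B(0)=1, A and B coprime, deg A = N−1 or deg B = N, and B nonvanishing on the closed unit disc. -/
/-!
The columns of the Hankel matrix are the shifts `S^ℓ a` of the coefficient sequence, so they
span the cyclic subspace of `a` under the shift `S`, whose dimension is the degree `N` of the
monic polynomial `Q` of least degree with `Q(S) a = 0`. For the reversed polynomial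
`B = X^N Q(1/X)`, the relation `Q(S) a = 0` says exactly that `B · Σ a_k z^k` is a polynomial
`A` of degree `< N`. Minimality of `Q` forbids cancelling a common factor of `A` and `B` or
lowering both degrees, since either would give a shorter recurrence; and a root `z` of `B` with
`|z| ≤ 1` would split off a factor `X - 1/z` of `Q`, leaving a nonzero geometric sequence of
ratio `1/z` that tends to zero because `a` does. Conversely, if `u = A/B` then the reversal of
`B` annihilates `a`, and coprimality of `A` and `B` forces every annihilator to have degree
at least `N`. Formal and analytic identities are matched by uniqueness of power series
expansions on the unit disc.
-/

open Polynomial Filter Topology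

namespace Module.End

variable {K E : Type*} [Field K] [AddCommGroup E] [Module K E] (T : Module.End K E) (v : E)

noncomputable def aevalAt : K[X] →ₗ[K] E := (LinearMap.applyₗ v).comp (aeval T).toLinearMap

@[simp]
lemma aevalAt_apply (p : K[X]) : T.aevalAt v p = aeval T p v := rfl

lemma range_aevalAt :
    LinearMap.range (T.aevalAt v) = Submodule.span K (Set.range fun ℓ => (T ^ ℓ) v) := by
  rw [LinearMap.range_eq_map, ← (basisMonomials K).span_eq, Submodule.map_span, ← Set.range_comp]
  congr 2
  ext ℓ
  simp [coe_basisMonomials]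

/-- The minimal polynomial of `T` on the cyclic subspace spanned by the `T ^ ℓ v`. -/
structure IsLocalMinpoly (Q : K[X]) : Prop where
  monic : Q.Monic
  aeval_apply_eq_zero : aeval T Q v = 0
  natDegree_le : ∀ p : K[X], p ≠ 0 → aeval T p v = 0 → Q.natDegree ≤ p.natDegree

variable {T v}

lemma IsLocalMinpoly.rank_span_range_pow_apply {Q : K[X]} (hQ : T.IsLocalMinpoly v Q) :
    Module.rank K (Submodule.span K (Set.range fun ℓ => (T ^ ℓ) v)) = Q.natDegree := by
  -- `p ↦ p(T) v` on polynomials of degree `< deg Q` is injective by minimality of `Q` and has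
  -- the full range by division with remainder by `Q`.
  set f := T.aevalAt v ∘ₗ (degreeLT K Q.natDegree).subtype
  have hinj : Function.Injective f := by
    rw [← LinearMap.ker_eq_bot, Submodule.eq_bot_iff]
    rintro ⟨p, hp⟩ hpv
    rw [Submodule.mk_eq_zero]
    by_contra hp0
    have := hQ.natDegree_le p hp0 hpv
    rw [mem_degreeLT, degree_eq_natDegree hp0, Nat.cast_lt] at hp
    omega
  have hrange : LinearMap.range f = LinearMap.range (T.aevalAt v) := by
    refine le_antisymm (LinearMap.range_comp_le_range _ _) ?_
    rintro _ ⟨p, rfl⟩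
    refine ⟨⟨p %ₘ Q, mem_degreeLT.2 ?_⟩, ?_⟩
    · rw [← degree_eq_natDegree hQ.monic.ne_zero]
      exact degree_modByMonic_lt p hQ.monic
    · conv_rhs => rw [← modByMonic_add_div p Q, mul_comm]
      simp [f, hQ.aeval_apply_eq_zero]
  have e := (LinearEquiv.ofInjective f hinj).symm ≪≫ₗ degreeLTEquiv K Q.natDegree
  rw [← range_aevalAt, ← hrange]
  simpa using e.lift_rank_eq

lemma exists_isLocalMinpoly_of_rank_lt_aleph0
    (h : Module.rank K (Submodule.span K (Set.range fun ℓ => (T ^ ℓ) v)) < Cardinal.aleph0) :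
    ∃ Q, T.IsLocalMinpoly v Q := by
  have hann : {p : K[X] | p ≠ 0 ∧ aeval T p v = 0}.Nonempty := by
    by_contra hempty
    have hinj : Function.Injective (T.aevalAt v) := by
      rw [← LinearMap.ker_eq_bot, Submodule.eq_bot_iff]
      intro p hp
      by_contra hp0
      exact hempty ⟨p, hp0, hp⟩
    rw [← range_aevalAt, Module.rank_lt_aleph0_iff] at h
    exact Polynomial.not_finite (Module.Finite.equiv (LinearEquiv.ofInjective _ hinj).symm)
  obtain ⟨p, ⟨hp0, hpv⟩, hmin⟩ := (measure natDegree).wf.has_min _ hann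
  refine ⟨_, monic_mul_leadingCoeff_inv hp0, ?_, fun q hq0 hqv => ?_⟩
  · simp [hpv]
  · rw [natDegree_mul_leadingCoeff_inv _ hp0]
    exact not_lt.1 (hmin q ⟨hq0, hqv⟩)

lemma rank_span_range_pow_apply_eq_iff (N : ℕ) :
    Module.rank K (Submodule.span K (Set.range fun ℓ => (T ^ ℓ) v)) = N ↔
      ∃ Q, T.IsLocalMinpoly v Q ∧ Q.natDegree = N := by
  constructor
  · intro h
    obtain ⟨Q, hQ⟩ := exists_isLocalMinpoly_of_rank_lt_aleph0 (h ▸ Cardinal.natCast_lt_aleph0)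
    exact ⟨Q, hQ, by exact_mod_cast hQ.rank_span_range_pow_apply.symm.trans h⟩
  · rintro ⟨Q, hQ, rfl⟩
    exact hQ.rank_span_range_pow_apply

end Module.End

namespace Polynomial

variable {R : Type*} [Semiring R]

lemma natDegree_reflect_le_of_le {p : R[X]} {N : ℕ} (h : p.natDegree ≤ N) :
    (reflect N p).natDegree ≤ N :=
  natDegree_reflect_le.trans (max_le le_rfl h)

lemma coeff_zero_reflect (N : ℕ) (p : R[X]) : (reflect N p).coeff 0 = p.coeff N := by
  rw [coeff_reflect, revAt_zero]

lemma degree_lt_iff_natDegree_le_sub_one {p : R[X]} {n : ℕ} (hn : 0 < n) :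
    p.degree < n ↔ p.natDegree ≤ n - 1 := by
  rw [degree_lt_iff_coeff_zero, natDegree_le_iff_coeff_eq_zero]
  exact ⟨fun h m hm => h m (by omega), fun h m hm => h m (by omega)⟩

lemma natDegree_reflect_of_coeff_zero_ne_zero {p : R[X]} {N : ℕ} (hp : p.natDegree ≤ N)
    (h0 : p.coeff 0 ≠ 0) : (reflect N p).natDegree = N :=
  le_antisymm (natDegree_reflect_le_of_le hp)
    (le_natDegree_of_ne_zero (by rwa [coeff_reflect, revAt_le le_rfl, Nat.sub_self]))

lemma monic_reflect_of_coeff_zero_eq_one {p : R[X]} {N : ℕ} (hp : p.natDegree ≤ N)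
    (h0 : p.coeff 0 = 1) : (reflect N p).Monic := by
  nontriviality R
  rw [Monic, leadingCoeff, natDegree_reflect_of_coeff_zero_ne_zero hp (by simp [h0]),
    coeff_reflect, revAt_le le_rfl, Nat.sub_self, h0]

end Polynomial

section PowerSeriesSum

open scoped NNReal ENNReal

variable {𝕜 : Type*} [RCLike 𝕜]

lemma hasFPowerSeriesOnBall_ofScalars_tsum {c : ℕ → 𝕜}
    (hc : ∀ z : 𝕜, ‖z‖ < 1 → Summable fun n => ‖c n * z ^ n‖) :
    HasFPowerSeriesOnBall (fun z => ∑' n, c n * z ^ n)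
      (FormalMultilinearSeries.ofScalars 𝕜 c) 0 1 := by
  have hrad : (1 : ℝ≥0∞) ≤ (FormalMultilinearSeries.ofScalars 𝕜 c).radius := by
    refine ENNReal.le_of_forall_nnreal_lt fun r hr => ?_
    refine FormalMultilinearSeries.le_radius_of_summable _ ?_
    have hr' : ‖((r : ℝ) : 𝕜)‖ < 1 := by simpa using hr
    simpa [FormalMultilinearSeries.ofScalars_norm, norm_mul, norm_pow] using hc _ hr'
  refine ⟨hrad, zero_lt_one, fun {y} hy => ?_⟩
  have hy' : ‖y‖ < 1 := by
    simpa [← ofReal_norm, ← ENNReal.ofReal_one, ENNReal.ofReal_lt_ofReal_iff one_pos] using hy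
  simpa [FormalMultilinearSeries.ofScalars_apply_eq, smul_eq_mul, mul_comm] using
    (hc y hy').of_norm.hasSum

lemma eq_of_tsum_mul_pow_eq {c d : ℕ → 𝕜}
    (hc : ∀ z : 𝕜, ‖z‖ < 1 → Summable fun n => ‖c n * z ^ n‖)
    (hd : ∀ z : 𝕜, ‖z‖ < 1 → Summable fun n => ‖d n * z ^ n‖)
    (h : ∀ z : 𝕜, ‖z‖ < 1 → ∑' n, c n * z ^ n = ∑' n, d n * z ^ n) : c = d := by
  refine FormalMultilinearSeries.ofScalars_series_injective (𝕜 := 𝕜) (E := 𝕜) ?_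
  refine (hasFPowerSeriesOnBall_ofScalars_tsum hc).hasFPowerSeriesAt
    |>.eq_formalMultilinearSeries_of_eventually
      (hasFPowerSeriesOnBall_ofScalars_tsum hd).hasFPowerSeriesAt ?_
  filter_upwards [Metric.ball_mem_nhds (0 : 𝕜) zero_lt_one] with z hz
  exact h z (by simpa using hz)

end PowerSeriesSum

section PolynomialTimesSeries

open Finset

variable {𝕜 : Type*} [RCLike 𝕜]

lemma summable_norm_mul_pow_of_bddAbove {a : ℕ → 𝕜} (ha : BddAbove (Set.range fun k => ‖a k‖))
    {z : 𝕜} (hz : ‖z‖ < 1) : Summable fun k => ‖a k * z ^ k‖ := by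
  obtain ⟨C, hC⟩ := ha
  refine Summable.of_nonneg_of_le (fun _ => norm_nonneg _) (fun k => ?_)
    ((summable_geometric_of_lt_one (norm_nonneg z) hz).mul_left C)
  rw [norm_mul, norm_pow]
  exact mul_le_mul_of_nonneg_right (hC ⟨k, rfl⟩) (by positivity)

lemma Polynomial.summable_norm_coeff_mul_pow (B : 𝕜[X]) (z : 𝕜) :
    Summable fun n => ‖B.coeff n * z ^ n‖ :=
  summable_of_ne_finset_zero (s := range (B.natDegree + 1)) fun n hn => by
    rw [coeff_eq_zero_of_natDegree_lt (by simpa [Nat.lt_succ_iff] using hn), zero_mul, norm_zero]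

lemma Polynomial.tsum_coeff_mul_pow (B : 𝕜[X]) (z : 𝕜) :
    ∑' n, B.coeff n * z ^ n = B.eval z := by
  rw [eval_eq_sum_range, tsum_eq_sum fun n hn => ?_]
  rw [coeff_eq_zero_of_natDegree_lt (by simpa [Nat.lt_succ_iff] using hn), zero_mul]

lemma coeff_mul_mk_mul_pow (B : 𝕜[X]) (a : ℕ → 𝕜) (z : 𝕜) (n : ℕ) :
    PowerSeries.coeff n ((B : PowerSeries 𝕜) * PowerSeries.mk a) * z ^ n =
      ∑ p ∈ antidiagonal n, B.coeff p.1 * z ^ p.1 * (a p.2 * z ^ p.2) := by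
  rw [PowerSeries.coeff_mul, Finset.sum_mul]
  refine Finset.sum_congr rfl fun p hp => ?_
  rw [Polynomial.coeff_coe, PowerSeries.coeff_mk, ← mem_antidiagonal.1 hp, pow_add]
  ring

lemma summable_norm_coeff_mul_mk_mul_pow (B : 𝕜[X]) {a : ℕ → 𝕜} {z : 𝕜}
    (ha : Summable fun k => ‖a k * z ^ k‖) :
    Summable fun n => ‖PowerSeries.coeff n ((B : PowerSeries 𝕜) * PowerSeries.mk a) * z ^ n‖ := by
  simpa only [coeff_mul_mk_mul_pow] using
    summable_norm_sum_mul_antidiagonal_of_summable_norm (B.summable_norm_coeff_mul_pow z) ha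

lemma tsum_coeff_mul_mk_mul_pow (B : 𝕜[X]) {a : ℕ → 𝕜} {z : 𝕜}
    (ha : Summable fun k => ‖a k * z ^ k‖) :
    ∑' n, PowerSeries.coeff n ((B : PowerSeries 𝕜) * PowerSeries.mk a) * z ^ n =
      B.eval z * ∑' k, a k * z ^ k := by
  simp only [coeff_mul_mk_mul_pow, ← B.tsum_coeff_mul_pow z]
  exact (tsum_mul_tsum_eq_tsum_sum_antidiagonal_of_summable_norm
    (B.summable_norm_coeff_mul_pow z) ha).symm

lemma tsum_mul_pow_eq_div_iff {a : ℕ → 𝕜} (ha : BddAbove (Set.range fun k => ‖a k‖))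
    {A B : 𝕜[X]} (hB : ∀ z : 𝕜, ‖z‖ < 1 → B.eval z ≠ 0) :
    (∀ z : 𝕜, ‖z‖ < 1 → ∑' k, a k * z ^ k = A.eval z / B.eval z) ↔
      (B : PowerSeries 𝕜) * PowerSeries.mk a = A := by
  have hBF : ∀ z : 𝕜, ‖z‖ < 1 →
      ∑' n, PowerSeries.coeff n ((B : PowerSeries 𝕜) * PowerSeries.mk a) * z ^ n =
        B.eval z * ∑' k, a k * z ^ k := fun z hz =>
    tsum_coeff_mul_mk_mul_pow B (summable_norm_mul_pow_of_bddAbove ha hz)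
  constructor
  · intro h
    have hcoeff := eq_of_tsum_mul_pow_eq
      (fun z hz => summable_norm_coeff_mul_mk_mul_pow B (summable_norm_mul_pow_of_bddAbove ha hz))
      (fun z _ => A.summable_norm_coeff_mul_pow z) fun z hz => by
        rw [hBF z hz, h z hz, A.tsum_coeff_mul_pow, mul_div_cancel₀ _ (hB z hz)]
    ext n
    rw [Polynomial.coeff_coe]
    exact congrFun hcoeff n
  · intro h z hz
    rw [eq_div_iff (hB z hz), mul_comm, ← hBF z hz, h]
    simp_rw [Polynomial.coeff_coe]
    exact A.tsum_coeff_mul_pow z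

end PolynomialTimesSeries

namespace PowerSeries

variable {R : Type*} [Semiring R]

lemma coe_trunc_eq_self {φ : PowerSeries R} {M : ℕ} (h : ∀ k, coeff (M + k) φ = 0) :
    (φ.trunc M : PowerSeries R) = φ := by
  ext n
  rw [Polynomial.coeff_coe, coeff_trunc]
  split_ifs with hn
  · rfl
  · obtain ⟨k, rfl⟩ := Nat.exists_eq_add_of_le (not_lt.1 hn)
    exact (h k).symm

end PowerSeries

namespace Kronecker

variable {R : Type*} [CommSemiring R]

def shift : Module.End R (ℕ → R) := LinearMap.funLeft R R (· + 1)

lemma shift_pow_apply (ℓ : ℕ) (a : ℕ → R) : (shift ^ ℓ) a = fun k => a (k + ℓ) := by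
  induction ℓ generalizing a with
  | zero => rfl
  | succ ℓ ih =>
    rw [pow_succ, Module.End.mul_apply, ih]
    ext k
    simp [shift, LinearMap.funLeft, add_assoc]

lemma aeval_shift_apply {p : R[X]} {n : ℕ} (hp : p.natDegree < n) (a : ℕ → R) (k : ℕ) :
    aeval shift p a k = ∑ i ∈ Finset.range n, p.coeff i * a (k + i) := by
  simp [aeval_eq_sum_range' hp, shift_pow_apply]

lemma coeff_mul_mk_add {B : R[X]} {M : ℕ} (hB : B.natDegree ≤ M) (a : ℕ → R) (k : ℕ) :
    PowerSeries.coeff (M + k) ((B : PowerSeries R) * PowerSeries.mk a) =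
      aeval shift (reflect M B) a k := by
  rw [aeval_shift_apply (Nat.lt_succ_of_le (natDegree_reflect_le_of_le hB)), PowerSeries.coeff_mul,
    Finset.Nat.sum_antidiagonal_eq_sum_range_succ_mk,
    ← Finset.sum_subset (Finset.range_subset_range.2 (by omega : M + 1 ≤ M + k + 1)),
    ← Finset.sum_range_reflect]
  · refine Finset.sum_congr rfl fun i hi => ?_
    rw [Finset.mem_range] at hi
    rw [coeff_reflect, revAt_le (by omega), Polynomial.coeff_coe, PowerSeries.coeff_mk]
    congr 2; omega
  · intro j _ hj
    rw [Finset.mem_range, not_lt] at hj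
    rw [Polynomial.coeff_coe, coeff_eq_zero_of_natDegree_lt (by omega), zero_mul]

lemma aeval_shift_reflect_eq_zero_iff {B : R[X]} {M : ℕ} (hB : B.natDegree ≤ M) (a : ℕ → R) :
    aeval shift (reflect M B) a = 0 ↔
      ∃ A : R[X], A.degree < M ∧ (B : PowerSeries R) * PowerSeries.mk a = A := by
  simp only [funext_iff, Pi.zero_apply, ← coeff_mul_mk_add hB]
  constructor
  · intro h
    exact ⟨_, PowerSeries.degree_trunc_lt _ M, (PowerSeries.coe_trunc_eq_self h).symm⟩
  · rintro ⟨A, hA, hBA⟩ k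
    rw [hBA, Polynomial.coeff_coe]
    exact coeff_eq_zero_of_degree_lt (lt_of_lt_of_le hA (by exact_mod_cast M.le_add_right k))

open Module.End

section Field

variable {K : Type*} [Field K] {a : ℕ → K} {Q A B : K[X]}

lemma natDegree_le_of_mul_mk_eq (hQ : shift.IsLocalMinpoly a Q) {M : ℕ}
    (hB0 : B ≠ 0) (hBM : B.natDegree ≤ M) (hAM : A.degree < M)
    (h : (B : PowerSeries K) * PowerSeries.mk a = A) : Q.natDegree ≤ M :=
  (hQ.natDegree_le _ (by rwa [Ne, reflect_eq_zero_iff])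
    ((aeval_shift_reflect_eq_zero_iff hBM a).2 ⟨A, hAM, h⟩)).trans
    (natDegree_reflect_le_of_le hBM)

lemma ne_zero_of_mul_mk_eq (hQ : shift.IsLocalMinpoly a Q) (hQ0 : 0 < Q.natDegree)
    (hB0 : B ≠ 0) (h : (B : PowerSeries K) * PowerSeries.mk a = A) : A ≠ 0 := by
  rintro rfl
  have ha : PowerSeries.mk a = 0 := by
    simpa [Polynomial.coe_eq_zero_iff, hB0] using h
  have := natDegree_le_of_mul_mk_eq hQ (A := 0) (M := 0) one_ne_zero natDegree_one.le
    (by simp) (by simp [ha])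
  omega

lemma natDegree_eq_or_of_mul_mk_eq (hQ : shift.IsLocalMinpoly a Q)
    (hQ0 : 0 < Q.natDegree) (hB0 : B ≠ 0) (hBQ : B.natDegree ≤ Q.natDegree)
    (hAQ : A.natDegree ≤ Q.natDegree - 1) (h : (B : PowerSeries K) * PowerSeries.mk a = A) :
    A.natDegree = Q.natDegree - 1 ∨ B.natDegree = Q.natDegree := by
  by_contra! hne
  have := natDegree_le_of_mul_mk_eq hQ (M := Q.natDegree - 1) hB0 (by omega)
    (degree_le_natDegree.trans_lt (by exact_mod_cast lt_of_le_of_ne hAQ hne.1)) h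
  omega

lemma isCoprime_of_mul_mk_eq (hQ : shift.IsLocalMinpoly a Q) (hA0 : A ≠ 0)
    (hB0 : B ≠ 0) (hBQ : B.natDegree ≤ Q.natDegree) (hAQ : A.degree < Q.natDegree)
    (h : (B : PowerSeries K) * PowerSeries.mk a = A) : IsCoprime A B := by
  classical
  by_contra hcop
  obtain ⟨A₁, hA₁⟩ := EuclideanDomain.gcd_dvd_left A B
  obtain ⟨B₁, hB₁⟩ := EuclideanDomain.gcd_dvd_right A B
  set g := EuclideanDomain.gcd A B
  have hg0 : g ≠ 0 := fun hg => hA0 (EuclideanDomain.gcd_eq_zero_iff.1 hg).1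
  have hg : 0 < g.natDegree := natDegree_pos_iff_degree_pos.2
    (degree_pos_of_ne_zero_of_nonunit hg0 (mt EuclideanDomain.gcd_isUnit_iff.1 hcop))
  have hA₁0 : A₁ ≠ 0 := by rintro rfl; simp [hA0] at hA₁
  have hB₁0 : B₁ ≠ 0 := by rintro rfl; simp [hB0] at hB₁
  have h₁ : (B₁ : PowerSeries K) * PowerSeries.mk a = A₁ := by
    refine mul_left_cancel₀ (Polynomial.coe_eq_zero_iff.not.2 hg0) ?_
    rw [← mul_assoc, ← Polynomial.coe_mul, ← Polynomial.coe_mul, ← hA₁, ← hB₁, h]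
  have hAdeg : A.natDegree = g.natDegree + A₁.natDegree := by rw [hA₁, natDegree_mul hg0 hA₁0]
  have hBdeg : B.natDegree = g.natDegree + B₁.natDegree := by rw [hB₁, natDegree_mul hg0 hB₁0]
  have hA' := (natDegree_lt_iff_degree_lt hA0).2 hAQ
  have hA₁Q : A₁.natDegree < Q.natDegree - 1 := by omega
  have := natDegree_le_of_mul_mk_eq hQ (M := Q.natDegree - 1) hB₁0 (by omega)
    (degree_le_natDegree.trans_lt (by exact_mod_cast hA₁Q)) h₁
  omega

lemma natDegree_le_of_aeval_shift_eq_zero {N : ℕ} (hA0 : A ≠ 0)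
    (hdeg : A.natDegree = N - 1 ∨ B.natDegree = N) (hcop : IsCoprime A B)
    (h : (B : PowerSeries K) * PowerSeries.mk a = A) {p : K[X]} (hp0 : p ≠ 0)
    (hpa : aeval shift p a = 0) : N ≤ p.natDegree := by
  -- The reversal `P` of `p` satisfies `P · F = A'`; together with `B · F = A` this gives
  -- `A · P = B · A'`, so `B ∣ P` by coprimality.
  set M := p.natDegree
  set P := reflect M p
  have hP0 : P ≠ 0 := by rwa [Ne, reflect_eq_zero_iff]
  have hPM : P.natDegree ≤ M := natDegree_reflect_le_of_le le_rfl
  obtain ⟨A', hA'M, h'⟩ := (aeval_shift_reflect_eq_zero_iff hPM a).1 (by rwa [reflect_reflect])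
  have hcross : A * P = B * A' := by
    rw [← Polynomial.coe_inj, Polynomial.coe_mul, Polynomial.coe_mul, ← h, ← h']
    ring
  have hBP : B ∣ P := hcop.symm.dvd_of_dvd_mul_left ⟨A', hcross⟩
  have hBP' : B.natDegree ≤ P.natDegree := natDegree_le_of_dvd hBP hP0
  have hB0 : B ≠ 0 := by rintro rfl; exact hP0 (zero_dvd_iff.1 hBP)
  rcases hdeg with hA | hB
  · have hA'0 : A' ≠ 0 := by
      rintro rfl
      exact mul_ne_zero hA0 hP0 (by simpa using hcross)
    have hsum : A.natDegree + P.natDegree = B.natDegree + A'.natDegree := by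
      rw [← natDegree_mul hA0 hP0, hcross, natDegree_mul hB0 hA'0]
    have := (natDegree_lt_iff_degree_lt hA'0).2 hA'M
    omega
  · omega

lemma isLocalMinpoly_reflect_of_mul_mk_eq {N : ℕ} (hN : 0 < N) (hA0 : A ≠ 0)
    (hB1 : B.coeff 0 = 1) (hAN : A.natDegree ≤ N - 1) (hBN : B.natDegree ≤ N)
    (hdeg : A.natDegree = N - 1 ∨ B.natDegree = N) (hcop : IsCoprime A B)
    (h : (B : PowerSeries K) * PowerSeries.mk a = A) :
    shift.IsLocalMinpoly a (reflect N B) ∧ (reflect N B).natDegree = N := by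
  have hdegN := natDegree_reflect_of_coeff_zero_ne_zero hBN (by simp [hB1])
  refine ⟨⟨monic_reflect_of_coeff_zero_eq_one hBN hB1,
    (aeval_shift_reflect_eq_zero_iff hBN a).2
      ⟨A, (degree_lt_iff_natDegree_le_sub_one hN).2 hAN, h⟩,
    fun p hp0 hpa => by
      rw [hdegN]; exact natDegree_le_of_aeval_shift_eq_zero hA0 hdeg hcop h hp0 hpa⟩, hdegN⟩

end Field

section Normed

variable {K : Type*} [NormedField K] {a : ℕ → K}

lemma tendsto_aeval_shift_apply (p : K[X]) (ha : Tendsto a atTop (𝓝 0)) :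
    Tendsto (aeval shift p a) atTop (𝓝 0) := by
  have hsum : aeval shift p a =
      fun k => ∑ i ∈ Finset.range (p.natDegree + 1), p.coeff i * a (k + i) :=
    funext (aeval_shift_apply (Nat.lt_succ_self _) a)
  rw [hsum]
  simpa using tendsto_finsetSum _ fun i _ =>
    (ha.comp (tendsto_add_atTop_nat i)).const_mul (p.coeff i)

lemma eq_zero_of_shift_eq_smul {b : ℕ → K} {α : K} (hb : Tendsto b atTop (𝓝 0))
    (hα : 1 ≤ ‖α‖) (h : shift b = α • b) : b = 0 := by
  have hgeom : ∀ k, b k = α ^ k * b 0 := by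
    intro k
    induction k with
    | zero => simp
    | succ k ih =>
      rw [show b (k + 1) = shift b k from rfl, h, Pi.smul_apply, ih, smul_eq_mul, pow_succ]
      ring
  have hb0 : ‖b 0‖ ≤ 0 := ge_of_tendsto' (by simpa using hb.norm) fun k => by
    rw [hgeom k, norm_mul, norm_pow]
    exact le_mul_of_one_le_left (norm_nonneg _) (one_le_pow₀ hα)
  ext k
  rw [hgeom k, norm_le_zero_iff.1 hb0, mul_zero, Pi.zero_apply]

lemma eval_reflect_ne_zero (hQ : shift.IsLocalMinpoly a Q) (ha : Tendsto a atTop (𝓝 0))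
    {z : K} (hz : ‖z‖ ≤ 1) : (reflect Q.natDegree Q).eval z ≠ 0 := by
  intro hQz
  have hz0 : z ≠ 0 := by
    rintro rfl
    rw [← coeff_zero_eq_eval_zero, coeff_zero_reflect] at hQz
    exact one_ne_zero (hQ.monic.coeff_natDegree ▸ hQz)
  let := invertibleOfNonzero (inv_ne_zero hz0)
  have hroot : Q.IsRoot z⁻¹ := by
    have := (eval₂_reflect_eq_zero_iff (RingHom.id K) z⁻¹ _ Q le_rfl).1
    simp only [invOf_eq_inv, inv_inv, eval₂_id] at this
    exact this hQz
  obtain ⟨Q₁, hQ₁⟩ := dvd_iff_isRoot.2 hroot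
  have hQ₁0 : Q₁ ≠ 0 := by rintro rfl; exact hQ.monic.ne_zero (by simpa using hQ₁)
  have hdeg : Q.natDegree = Q₁.natDegree + 1 := by
    rw [hQ₁, natDegree_mul (X_sub_C_ne_zero _) hQ₁0, natDegree_X_sub_C, add_comm]
  have hshift : shift (aeval shift Q₁ a) = z⁻¹ • aeval shift Q₁ a := by
    have := hQ.aeval_apply_eq_zero
    rw [hQ₁, map_mul, Module.End.mul_apply, map_sub, aeval_X, aeval_C, LinearMap.sub_apply,
      sub_eq_zero] at this
    simpa using this
  have := hQ.natDegree_le Q₁ hQ₁0 (eq_zero_of_shift_eq_smul (tendsto_aeval_shift_apply Q₁ ha)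
    (by rwa [norm_inv, one_le_inv₀ (norm_pos_iff.2 hz0)]) hshift)
  omega

end Normed

end Kronecker

open Kronecker Module.End in
/-- **Kronecker's theorem.** For `u ∈ L²_+` with coefficients `a` (e.g.
`u ∈ BMO_+`), the Hankel operator `H_u` has complex rank `N ≥ 1` — i.e. the span of the
columns `(û(k+ℓ))_{k≥0}`, `ℓ ≥ 0`, of the Hankel matrix has dimension `N` — if and only
if `u = A/B` with `A ∈ ℂ_{N−1}[z]`, `B ∈ ℂ_N[z]`, `B(0)=1`, `A, B` coprime,
`deg A = N−1` or `deg B = N`, and `B` nonvanishing on the closed unit disc. -/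
theorem stmt8 (a : ℕ → ℂ) (ha : Summable fun k : ℕ => ‖a k‖ ^ 2) (N : ℕ) (hN : 0 < N) :
    Module.rank ℂ
        ↥(Submodule.span ℂ (Set.range fun ℓ : ℕ => (fun k => a (k + ℓ) : ℕ → ℂ))) = N ↔
      ∃ A B : Polynomial ℂ, A ≠ 0 ∧ B.coeff 0 = 1 ∧
        A.natDegree ≤ N - 1 ∧ B.natDegree ≤ N ∧
        (A.natDegree = N - 1 ∨ B.natDegree = N) ∧
        IsCoprime A B ∧
        (∀ z : ℂ, ‖z‖ ≤ 1 → B.eval z ≠ 0) ∧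
        ∀ z : ℂ, ‖z‖ < 1 → ∑' k : ℕ, a k * z ^ k = A.eval z / B.eval z := by
  have ha0 : Tendsto a atTop (𝓝 0) := by
    refine tendsto_zero_iff_norm_tendsto_zero.2 ?_
    simpa [Real.sqrt_sq (norm_nonneg _)] using ha.tendsto_atTop_zero.sqrt
  have hbdd := ha0.norm.bddAbove_range
  rw [show (fun ℓ k => a (k + ℓ)) = fun ℓ => (shift ^ ℓ) a from
    funext fun ℓ => (shift_pow_apply ℓ a).symm, rank_span_range_pow_apply_eq_iff]
  constructor
  · rintro ⟨Q, hQ, rfl⟩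
    set B := reflect Q.natDegree Q
    have hB1 : B.coeff 0 = 1 := by rw [coeff_zero_reflect]; exact hQ.monic
    have hB0 : B ≠ 0 := by rintro h; simp [h] at hB1
    have hBQ : B.natDegree ≤ Q.natDegree := natDegree_reflect_le_of_le le_rfl
    obtain ⟨A, hAQ, h⟩ := (aeval_shift_reflect_eq_zero_iff hBQ a).1
      (by rw [reflect_reflect]; exact hQ.aeval_apply_eq_zero)
    have hAQ' := (degree_lt_iff_natDegree_le_sub_one hN).1 hAQ
    have hA0 := ne_zero_of_mul_mk_eq hQ hN hB0 h
    have hBz : ∀ z : ℂ, ‖z‖ ≤ 1 → B.eval z ≠ 0 := fun z hz => eval_reflect_ne_zero hQ ha0 hz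
    exact ⟨A, B, hA0, hB1, hAQ', hBQ, natDegree_eq_or_of_mul_mk_eq hQ hN hB0 hBQ hAQ' h,
      isCoprime_of_mul_mk_eq hQ hA0 hB0 hBQ hAQ h, hBz,
      (tsum_mul_pow_eq_div_iff hbdd fun z hz => hBz z hz.le).2 h⟩
  · rintro ⟨A, B, hA0, hB1, hAN, hBN, hdeg, hcop, hBz, hF⟩
    exact ⟨_, isLocalMinpoly_reflect_of_mul_mk_eq hN hA0 hB1 hAN hBN hdeg hcop
      ((tsum_mul_pow_eq_div_iff hbdd fun z hz => hBz z hz.le).1 hF)⟩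
end

section
/- Trudinger type estimate: there is a constant C such that for every p ∈ [2, ∞) and every u ∈ H^{1/2}(S¹), ‖u‖_{L^p(S¹)} ≤ C √p ‖u‖_{H^{1/2}(S¹)}. -/
/-!
Split the Fourier series of `u` into dyadic blocks of frequencies `2 ^ j ≤ 1 + |k| < 2 ^ (j + 1)`.
A trigonometric polynomial with `n` frequencies has `‖f‖_∞ ≤ √n ‖f‖₂`, so interpolating between
`L²` and `L^∞` gives `‖f‖_p ≤ n ^ (1/2 - 1/p) ‖f‖₂`. For the `j`-th block, `n ≤ 4 · 2 ^ j` while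
`‖f‖₂² ≤ 2 ^ (-j) A_j`, with `A_j` the `H^{1/2}`-energy of the block, so
`‖f‖_p ≤ 2 · 2 ^ (-j/p) √A_j`. Cauchy–Schwarz against the geometric series
`∑ 2 ^ (-2j/p) ≤ p + 1` bounds every dyadic partial sum by `2 √(p + 1) ‖u‖_{H^{1/2}}` in `L^p`.
The partial sums converge to `u` in `L²`, hence in measure, and the `L^p` bound passes to the limit.
-/

noncomputable section

open MeasureTheory Real AddCircle

instance : Fact (0 < 2 * π) := ⟨by positivity⟩

open Finset Filter Topology
open scoped ENNReal NNReal

section Interpolation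

variable {α E : Type*} [MeasurableSpace α] {μ : Measure α} [NormedAddCommGroup E]

theorem eLpNorm_le_rpow_mul_eLpNorm_two_rpow {f : α → E} {M : ℝ≥0} {p : ℝ} (hp : 2 ≤ p)
    (hf : ∀ᵐ x ∂μ, ‖f x‖ₑ ≤ M) :
    eLpNorm f (ENNReal.ofReal p) μ ≤ (M : ℝ≥0∞) ^ (1 - 2 / p) * eLpNorm f 2 μ ^ (2 / p) := by
  have hp0 : 0 < p := by linarith
  have hpoint : ∀ᵐ x ∂μ, ‖f x‖ₑ ^ p ≤ (M : ℝ≥0∞) ^ (p - 2) * ‖f x‖ₑ ^ (2 : ℝ) := by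
    filter_upwards [hf] with x hx
    calc ‖f x‖ₑ ^ p = ‖f x‖ₑ ^ (p - 2) * ‖f x‖ₑ ^ (2 : ℝ) := by
          rw [← ENNReal.rpow_add_of_nonneg _ _ (by linarith) zero_le_two, sub_add_cancel]
      _ ≤ M ^ (p - 2) * ‖f x‖ₑ ^ (2 : ℝ) := by gcongr
  rw [eLpNorm_eq_lintegral_rpow_enorm_toReal (by simpa using hp0) ENNReal.ofReal_ne_top,
    eLpNorm_eq_lintegral_rpow_enorm_toReal two_ne_zero ENNReal.ofNat_ne_top,
    ENNReal.toReal_ofReal hp0.le, ENNReal.toReal_ofNat]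
  calc (∫⁻ x, ‖f x‖ₑ ^ p ∂μ) ^ (1 / p)
      ≤ (∫⁻ x, M ^ (p - 2) * ‖f x‖ₑ ^ (2 : ℝ) ∂μ) ^ (1 / p) := by
        gcongr ?_ ^ _
        exact lintegral_mono_ae hpoint
    _ = (M ^ (p - 2) * ∫⁻ x, ‖f x‖ₑ ^ (2 : ℝ) ∂μ) ^ (1 / p) := by
        rw [lintegral_const_mul' _ _
          (ENNReal.rpow_ne_top_of_nonneg (by linarith) ENNReal.coe_ne_top)]
    _ = M ^ (1 - 2 / p) * ((∫⁻ x, ‖f x‖ₑ ^ (2 : ℝ) ∂μ) ^ (1 / (2 : ℝ))) ^ (2 / p) := by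
        rw [ENNReal.mul_rpow_of_nonneg _ _ (by positivity), ← ENNReal.rpow_mul,
          ← ENNReal.rpow_mul]
        congr 2 <;> field_simp

end Interpolation

section FourierPolynomial

variable {T : ℝ} [Fact (0 < T)]

theorem norm_sum_smul_fourier_apply_le (s : Finset ℤ) (c : ℤ → ℂ) (x : AddCircle T) :
    ‖(∑ k ∈ s, c k • fourier k) x‖ ≤ ∑ k ∈ s, ‖c k‖ :=
  calc ‖(∑ k ∈ s, c k • fourier k) x‖ ≤ ‖∑ k ∈ s, c k • fourier (T := T) k‖ :=
        ContinuousMap.norm_coe_le_norm _ x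
    _ ≤ ∑ k ∈ s, ‖c k • fourier (T := T) k‖ := norm_sum_le _ _
    _ = ∑ k ∈ s, ‖c k‖ := by simp only [norm_smul, fourier_norm, mul_one]

theorem toLp_sum_smul_fourier (p : ℝ≥0∞) [Fact (1 ≤ p)] (s : Finset ℤ) (c : ℤ → ℂ) :
    ContinuousMap.toLp p haarAddCircle ℂ (∑ k ∈ s, c k • fourier k) =
      ∑ k ∈ s, c k • fourierLp (T := T) p k := by
  simp only [map_sum, map_smul]

theorem eLpNorm_two_sum_smul_fourier (s : Finset ℤ) (c : ℤ → ℂ) :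
    eLpNorm (∑ k ∈ s, c k • fourier (T := T) k : C(AddCircle T, ℂ)) 2 haarAddCircle =
      ENNReal.ofReal √(∑ k ∈ s, ‖c k‖ ^ 2) := by
  rw [← eLpNorm_congr_ae (ContinuousMap.coeFn_toLp (p := 2) (𝕜 := ℂ) haarAddCircle _),
    toLp_sum_smul_fourier, ← Lp.enorm_def, ← ofReal_norm,
    ← (orthonormal_fourier (T := T)).orthogonalFamily.norm_sum]
  simp only [LinearIsometry.toSpanSingleton_apply, norm_nonneg, sqrt_sq]

theorem eLpNorm_sum_smul_fourier_le {p : ℝ} (hp : 2 ≤ p) (s : Finset ℤ) (c : ℤ → ℂ) :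
    eLpNorm (∑ k ∈ s, c k • fourier (T := T) k : C(AddCircle T, ℂ)) (ENNReal.ofReal p)
        haarAddCircle ≤
      ENNReal.ofReal ((#s : ℝ) ^ (1 / 2 - 1 / p) * √(∑ k ∈ s, ‖c k‖ ^ 2)) := by
  set β := √(∑ k ∈ s, ‖c k‖ ^ 2)
  set M := ∑ k ∈ s, ‖c k‖
  have hθ : 2 / p ≤ 1 := (div_le_one (by linarith)).2 hp
  have hβ : 0 ≤ β := sqrt_nonneg _
  have hM : M ≤ √(#s : ℝ) * β := by
    simpa using Real.sum_mul_le_sqrt_mul_sqrt s (fun _ => 1) (fun k => ‖c k‖)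
  have hbd : ∀ᵐ x ∂haarAddCircle, ‖(∑ k ∈ s, c k • fourier (T := T) k) x‖ₑ ≤ M.toNNReal :=
    ae_of_all _ fun x => by
      rw [← ofReal_norm]
      exact ENNReal.ofReal_le_ofReal (norm_sum_smul_fourier_apply_le s c x)
  refine (eLpNorm_le_rpow_mul_eLpNorm_two_rpow hp hbd).trans ?_
  change ENNReal.ofReal M ^ _ * _ ≤ _
  rw [eLpNorm_two_sum_smul_fourier,
    ENNReal.ofReal_rpow_of_nonneg (by positivity) (by linarith),
    ENNReal.ofReal_rpow_of_nonneg hβ (by positivity), ← ENNReal.ofReal_mul (by positivity)]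
  refine ENNReal.ofReal_le_ofReal ?_
  calc M ^ (1 - 2 / p) * β ^ (2 / p) ≤ (√(#s : ℝ) * β) ^ (1 - 2 / p) * β ^ (2 / p) := by
        gcongr
    _ = (#s : ℝ) ^ (1 / 2 - 1 / p) * β := by
        rw [mul_rpow (sqrt_nonneg _) hβ, mul_assoc, ← rpow_add' hβ (by norm_num), sqrt_eq_rpow,
          ← rpow_mul (Nat.cast_nonneg _), sub_add_cancel, rpow_one]
        ring_nf

end FourierPolynomial

section DyadicBlock

/-- The frequencies `k` with `2 ^ j ≤ |k| + 1 < 2 ^ (j + 1)`; the `Ioo` only makes it finite. -/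
def dyadicBlock (j : ℕ) : Finset ℤ :=
  (Ioo (-2 ^ (j + 1) : ℤ) (2 ^ (j + 1))).filter fun k => Nat.log 2 (k.natAbs + 1) = j

theorem mem_dyadicBlock {j : ℕ} {k : ℤ} : k ∈ dyadicBlock j ↔ Nat.log 2 (k.natAbs + 1) = j := by
  refine ⟨fun h => (mem_filter.1 h).2, fun h => mem_filter.2 ⟨?_, h⟩⟩
  have hlt : k.natAbs + 1 < 2 ^ (j + 1) := h ▸ Nat.lt_pow_succ_log_self one_lt_two _
  have hlt' : (k.natAbs : ℤ) + 1 < 2 ^ (j + 1) := by exact_mod_cast hlt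
  rw [mem_Ioo]
  omega

theorem two_pow_le_of_mem_dyadicBlock {j : ℕ} {k : ℤ} (hk : k ∈ dyadicBlock j) :
    (2 : ℝ) ^ j ≤ 1 + |(k : ℝ)| := by
  have h : 2 ^ j ≤ k.natAbs + 1 :=
    mem_dyadicBlock.1 hk ▸ Nat.pow_log_le_self 2 k.natAbs.succ_ne_zero
  rw [← Int.cast_abs, ← Int.natCast_natAbs, add_comm]
  exact_mod_cast h

theorem card_dyadicBlock_le (j : ℕ) : #(dyadicBlock j) ≤ 4 * 2 ^ j := by
  refine (card_filter_le _ _).trans ?_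
  have h : (2 : ℤ) ^ (j + 1) = 2 * (2 ^ j : ℕ) := by push_cast; ring
  rw [Int.card_Ioo, h]
  omega

theorem pairwiseDisjoint_dyadicBlock (s : Set ℕ) : s.PairwiseDisjoint dyadicBlock :=
  fun _ _ _ _ hij => disjoint_left.2 fun _ hi hj =>
    hij ((mem_dyadicBlock.1 hi).symm.trans (mem_dyadicBlock.1 hj))

theorem tendsto_biUnion_dyadicBlock_atTop :
    Tendsto (fun n => (range (n + 1)).biUnion dyadicBlock) atTop atTop :=
  tendsto_atTop_finset_of_monotone
    (fun _ _ h => biUnion_subset_biUnion_of_subset_left _ (range_subset_range.2 (by omega)))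
    fun k => ⟨_, mem_biUnion.2 ⟨_, self_mem_range_succ _, mem_dyadicBlock.2 rfl⟩⟩

end DyadicBlock

theorem sum_range_two_rpow_neg_pow_le {p : ℝ} (hp : 0 < p) (N : ℕ) :
    ∑ j ∈ range N, ((2 : ℝ) ^ (-(2 / p))) ^ j ≤ p + 1 := by
  set r : ℝ := 2 ^ (-(2 / p))
  have hexp : 1 + 1 / p ≤ (2 : ℝ) ^ (2 / p) :=
    calc 1 + 1 / p ≤ 2 / p * log 2 + 1 := by
          have : 1 / p ≤ 2 / p * log 2 := by
            rw [div_mul_eq_mul_div, div_le_div_iff_of_pos_right hp]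
            linarith [log_two_gt_d9]
          linarith
      _ ≤ exp (2 / p * log 2) := add_one_le_exp _
      _ = (2 : ℝ) ^ (2 / p) := by rw [rpow_def_of_pos two_pos, mul_comm]
  have hr : r ≤ 1 - 1 / (p + 1) := by
    calc r = ((2 : ℝ) ^ (2 / p))⁻¹ := rpow_neg zero_le_two _
      _ ≤ (1 + 1 / p)⁻¹ := inv_anti₀ (by positivity) hexp
      _ = 1 - 1 / (p + 1) := by field_simp; ring
  have hr1 : r < 1 := hr.trans_lt (sub_lt_self 1 (by positivity))
  calc ∑ j ∈ range N, r ^ j ≤ r ^ 0 / (1 - r) := by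
        simpa using geom_sum_Ico_le_of_lt_one (m := 0) (n := N) (by positivity) hr1
    _ ≤ 1 / (1 / (p + 1)) := by
        rw [pow_zero]
        exact one_div_le_one_div_of_le (by positivity) (by linarith)
    _ = p + 1 := one_div_one_div _

theorem sum_range_two_rpow_pow_mul_sqrt_le {p : ℝ} (hp : 0 < p) (a : ℕ → ℝ) (ha : ∀ j, 0 ≤ a j)
    (N : ℕ) :
    ∑ j ∈ range N, ((2 : ℝ) ^ (-(1 / p))) ^ j * √(a j) ≤ √(p + 1) * √(∑ j ∈ range N, a j) := by
  refine (sum_mul_le_sqrt_mul_sqrt _ _ _).trans ?_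
  gcongr
  · refine le_of_eq_of_le (sum_congr rfl fun j _ => ?_) (sum_range_two_rpow_neg_pow_le hp N)
    rw [← pow_mul, mul_comm, pow_mul, ← rpow_natCast (_ ^ _) 2, ← rpow_mul zero_le_two]
    ring_nf
  · exact (sq_sqrt (ha _)).le

section DyadicDecomposition

variable {T : ℝ} [Fact (0 < T)]

theorem eLpNorm_sum_dyadicBlock_le {p : ℝ} (hp : 2 ≤ p) (c : ℤ → ℂ) (j : ℕ) :
    eLpNorm (∑ k ∈ dyadicBlock j, c k • fourier (T := T) k : C(AddCircle T, ℂ))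
        (ENNReal.ofReal p) haarAddCircle ≤
      ENNReal.ofReal (2 * ((2 : ℝ) ^ (-(1 / p))) ^ j *
        √(∑ k ∈ dyadicBlock j, (1 + |(k : ℝ)|) * ‖c k‖ ^ 2)) := by
  refine (eLpNorm_sum_smul_fourier_le hp _ c).trans (ENNReal.ofReal_le_ofReal ?_)
  set d : ℝ := 2 ^ j
  set A := ∑ k ∈ dyadicBlock j, (1 + |(k : ℝ)|) * ‖c k‖ ^ 2
  have hd : 0 < d := by positivity
  have hθ : 0 ≤ 1 / 2 - 1 / p := by
    rw [sub_nonneg]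
    exact one_div_le_one_div_of_le two_pos hp
  have hcard : (#(dyadicBlock j) : ℝ) ^ (1 / 2 - 1 / p) ≤ 2 * d ^ (1 / 2 - 1 / p) :=
    calc (#(dyadicBlock j) : ℝ) ^ (1 / 2 - 1 / p) ≤ (4 * d) ^ (1 / 2 - 1 / p) := by
          gcongr
          have h : (#(dyadicBlock j) : ℝ) ≤ (4 * 2 ^ j : ℕ) := Nat.cast_le.2 (card_dyadicBlock_le j)
          simpa using h
      _ = 4 ^ (1 / 2 - 1 / p) * d ^ (1 / 2 - 1 / p) := mul_rpow (by norm_num) hd.le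
      _ ≤ 4 ^ (1 / 2 : ℝ) * d ^ (1 / 2 - 1 / p) := by
          gcongr
          · norm_num
          · linarith [one_div_nonneg.2 (by linarith : (0 : ℝ) ≤ p)]
      _ = 2 * d ^ (1 / 2 - 1 / p) := by
          rw [show (4 : ℝ) = 2 ^ (2 : ℝ) by norm_num, ← rpow_mul zero_le_two]
          norm_num
  have henergy : √(∑ k ∈ dyadicBlock j, ‖c k‖ ^ 2) ≤ d ^ (-(1 / 2) : ℝ) * √A := by
    have h : ∑ k ∈ dyadicBlock j, ‖c k‖ ^ 2 ≤ d⁻¹ * A := by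
      rw [mul_sum]
      refine sum_le_sum fun k hk => ?_
      rw [inv_mul_eq_div, le_div_iff₀ hd, mul_comm]
      gcongr
      exact two_pow_le_of_mem_dyadicBlock hk
    calc √(∑ k ∈ dyadicBlock j, ‖c k‖ ^ 2) ≤ √(d⁻¹ * A) := sqrt_le_sqrt h
      _ = d ^ (-(1 / 2) : ℝ) * √A := by
          rw [sqrt_mul (inv_nonneg.2 hd.le), sqrt_eq_rpow, ← rpow_neg_one, ← rpow_mul hd.le]
          norm_num
  calc (#(dyadicBlock j) : ℝ) ^ (1 / 2 - 1 / p) * √(∑ k ∈ dyadicBlock j, ‖c k‖ ^ 2)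
      ≤ 2 * d ^ (1 / 2 - 1 / p) * (d ^ (-(1 / 2) : ℝ) * √A) := by gcongr
    _ = 2 * (d ^ (1 / 2 - 1 / p) * d ^ (-(1 / 2) : ℝ)) * √A := by ring
    _ = 2 * d ^ (-(1 / p)) * √A := by
        rw [← rpow_add hd]
        ring_nf
    _ = 2 * ((2 : ℝ) ^ (-(1 / p))) ^ j * √A := by rw [rpow_pow_comm zero_le_two]

theorem eLpNorm_sum_biUnion_dyadicBlock_le {p : ℝ} (hp : 2 ≤ p) (c : ℤ → ℂ) (n : ℕ) :
    eLpNorm (∑ k ∈ (range (n + 1)).biUnion dyadicBlock, c k • fourier (T := T) k :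
        C(AddCircle T, ℂ)) (ENNReal.ofReal p) haarAddCircle ≤
      ENNReal.ofReal (2 * √(p + 1) *
        √(∑ k ∈ (range (n + 1)).biUnion dyadicBlock, (1 + |(k : ℝ)|) * ‖c k‖ ^ 2)) := by
  set A : ℕ → ℝ := fun j => ∑ k ∈ dyadicBlock j, (1 + |(k : ℝ)|) * ‖c k‖ ^ 2
  have hA : ∀ j, 0 ≤ A j := fun j => sum_nonneg fun k _ => by positivity
  rw [sum_biUnion (pairwiseDisjoint_dyadicBlock _), sum_biUnion (pairwiseDisjoint_dyadicBlock _),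
    ContinuousMap.coe_sum]
  calc eLpNorm (∑ j ∈ range (n + 1), ⇑(∑ k ∈ dyadicBlock j, c k • fourier (T := T) k))
        (ENNReal.ofReal p) haarAddCircle
      ≤ ∑ j ∈ range (n + 1), eLpNorm (∑ k ∈ dyadicBlock j, c k • fourier (T := T) k :
          C(AddCircle T, ℂ)) (ENNReal.ofReal p) haarAddCircle :=
        eLpNorm_sum_le (fun _ _ => (map_continuous _).aestronglyMeasurable)
          (ENNReal.one_le_ofReal.2 (by linarith))
    _ ≤ ∑ j ∈ range (n + 1), ENNReal.ofReal (2 * ((2 : ℝ) ^ (-(1 / p))) ^ j * √(A j)) :=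
        sum_le_sum fun j _ => eLpNorm_sum_dyadicBlock_le hp c j
    _ = ENNReal.ofReal (2 * ∑ j ∈ range (n + 1), ((2 : ℝ) ^ (-(1 / p))) ^ j * √(A j)) := by
        rw [← ENNReal.ofReal_sum_of_nonneg fun j _ => by positivity, mul_sum]
        simp only [mul_assoc]
    _ ≤ ENNReal.ofReal (2 * √(p + 1) * √(∑ j ∈ range (n + 1), A j)) := by
        rw [mul_assoc]
        gcongr
        exact sum_range_two_rpow_pow_mul_sqrt_le (by linarith) A hA _

end DyadicDecomposition

/-- **Trudinger-type estimate.** There is a constant `C` such that for every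
`p ∈ [2, ∞)` and every `u ∈ H^{1/2}(S¹)` (with `‖u‖²_{H^{1/2}} = Σ_k (1+|k|)|û(k)|²`),
`‖u‖_{L^p} ≤ C √p ‖u‖_{H^{1/2}}`, the `L^p` norm being taken with respect to the
normalized Haar measure on the circle. -/
theorem stmt11 :
    ∃ C : ℝ, 0 < C ∧
      ∀ (p : ℝ), 2 ≤ p →
        ∀ u : AddCircle (2 * π) → ℂ, MemLp u 2 haarAddCircle →
          (Summable fun k : ℤ => (1 + |(k : ℝ)|) * ‖fourierCoeff u k‖ ^ 2) →
          eLpNorm u (ENNReal.ofReal p) haarAddCircle ≤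
            ENNReal.ofReal (C * Real.sqrt p *
              Real.sqrt (∑' k : ℤ, (1 + |(k : ℝ)|) * ‖fourierCoeff u k‖ ^ 2)) := by
  refine ⟨3, by norm_num, fun p hp u hu hsum => ?_⟩
  set U : ℕ → Finset ℤ := fun n => (range (n + 1)).biUnion dyadicBlock
  set S : ℕ → C(AddCircle (2 * π), ℂ) := fun n => ∑ k ∈ U n, fourierCoeff u k • fourier k
  have hcoeff : fourierCoeff (hu.toLp u) = fourierCoeff u := fourierCoeff_congr_ae hu.coeFn_toLp
  have hconv : Tendsto (fun n => ContinuousMap.toLp 2 haarAddCircle ℂ (S n)) atTop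
      (𝓝 (hu.toLp u)) := by
    simp only [S, toLp_sum_smul_fourier, ← hcoeff]
    exact (hasSum_fourier_series_L2 _).comp tendsto_biUnion_dyadicBlock_atTop
  rw [← eLpNorm_congr_ae hu.coeFn_toLp]
  refine eLpNorm_le_of_tendstoInMeasure (Eventually.of_forall fun n => ?_)
    (tendstoInMeasure_of_tendsto_Lp hconv) fun _ => Lp.aestronglyMeasurable _
  rw [eLpNorm_congr_ae (ContinuousMap.coeFn_toLp (𝕜 := ℂ) haarAddCircle _)]
  refine (eLpNorm_sum_biUnion_dyadicBlock_le hp _ n).trans (ENNReal.ofReal_le_ofReal ?_)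
  have hconst : 2 * √(p + 1) ≤ 3 * √p := by
    nlinarith [sq_sqrt (by linarith : 0 ≤ p + 1), sq_sqrt (by linarith : 0 ≤ p),
      sqrt_nonneg (p + 1), sqrt_nonneg p]
  gcongr
  exact hsum.sum_le_tsum _ fun k _ => by positivity
end
end

section
/- Nonlinear Gronwall lemma: if f : [0,∞) → [0,∞) is continuous, nondecreasing, and satisfies f(t) ≤ f(0) + A ∫₀^t log(2 + f(t')) f(t') dt' for all t ≥ 0, then 2 + f(t) ≤ (2 + f(0))^{exp(At)}. -/
open Real Set

/-!
Put `F(t) = f(0) + A ∫₀ᵗ log(2 + f) f`, so that `f ≤ F`, `F(0) = f(0)` and `F' = A log(2 + f) f`.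
Since `0 ≤ f ≤ F`, the function `u = 2 + F > 1` satisfies the Bihari-type inequality
`u' ≤ A u log u`, i.e. `(log log u)' ≤ A`. Integrating gives `log u(t) ≤ exp(At) log u(0)`.
-/

theorem log_log_sub_le_of_hasDerivAt_le_mul_log {u u' : ℝ → ℝ} {A a b : ℝ} (hab : a ≤ b)
    (hu : ContinuousOn u (Icc a b)) (hu_gt : ∀ x ∈ Icc a b, 1 < u x)
    (hderiv : ∀ x ∈ Ioo a b, HasDerivAt u (u' x) x)
    (hbound : ∀ x ∈ Ioo a b, u' x ≤ A * (u x * log (u x))) :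
    log (log (u b)) - log (log (u a)) ≤ A * (b - a) := by
  have hlog_pos : ∀ x ∈ Icc a b, 0 < log (u x) := fun x hx => log_pos (hu_gt x hx)
  have hu_pos : ∀ x ∈ Icc a b, 0 < u x := fun x hx => one_pos.trans (hu_gt x hx)
  have hderiv_loglog : ∀ x ∈ Ioo a b,
      HasDerivAt (fun s => log (log (u s))) (u' x / u x / log (u x)) x := fun x hx =>
    ((hderiv x hx).log (hu_pos x (Ioo_subset_Icc_self hx)).ne').log
      (hlog_pos x (Ioo_subset_Icc_self hx)).ne'
  have hcont : ContinuousOn (fun s => log (log (u s))) (Icc a b) :=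
    (hu.log fun x hx => (hu_pos x hx).ne').log fun x hx => (hlog_pos x hx).ne'
  refine (convex_Icc a b).image_sub_le_mul_sub_of_deriv_le hcont ?_ ?_ a (left_mem_Icc.2 hab) b
    (right_mem_Icc.2 hab) hab
  · rw [interior_Icc]
    exact fun x hx => (hderiv_loglog x hx).differentiableAt.differentiableWithinAt
  · rw [interior_Icc]
    intro x hx
    rw [(hderiv_loglog x hx).deriv, div_div, div_le_iff₀ (mul_pos (hu_pos x
      (Ioo_subset_Icc_self hx)) (hlog_pos x (Ioo_subset_Icc_self hx)))]
    exact hbound x hx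

theorem le_rpow_exp_of_hasDerivAt_le_mul_log {u u' : ℝ → ℝ} {A a b : ℝ} (hab : a ≤ b)
    (hu : ContinuousOn u (Icc a b)) (hu_gt : ∀ x ∈ Icc a b, 1 < u x)
    (hderiv : ∀ x ∈ Ioo a b, HasDerivAt u (u' x) x)
    (hbound : ∀ x ∈ Ioo a b, u' x ≤ A * (u x * log (u x))) :
    u b ≤ u a ^ exp (A * (b - a)) := by
  have ha := hu_gt a (left_mem_Icc.2 hab)
  have hb := hu_gt b (right_mem_Icc.2 hab)
  have hloglog := log_log_sub_le_of_hasDerivAt_le_mul_log hab hu hu_gt hderiv hbound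
  rw [le_rpow_iff_log_le (by linarith) (by linarith), ← log_le_log_iff (log_pos hb)
    (mul_pos (exp_pos _) (log_pos ha)), log_mul (exp_pos _).ne' (log_pos ha).ne', log_exp]
  linarith

theorem log_two_add_mul_le {x y : ℝ} (hx : 0 ≤ x) (hxy : x ≤ y) :
    log (2 + x) * x ≤ (2 + y) * log (2 + y) := by
  rw [mul_comm]
  exact mul_le_mul (by linarith) (log_le_log (by linarith) (by linarith))
    (log_nonneg (by linarith)) (by linarith)

theorem hasDerivAt_integral_of_continuousOn_Ici {g : ℝ → ℝ} {a x : ℝ}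
    (hg : ContinuousOn g (Ici a)) (hx : a < x) :
    HasDerivAt (fun s => ∫ t in a..s, g t) (g x) x := by
  have hg_Ioi : ContinuousOn g (Ioi a) := hg.mono Ioi_subset_Ici_self
  refine intervalIntegral.integral_hasDerivAt_right ?_
    (hg_Ioi.stronglyMeasurableAtFilter isOpen_Ioi x hx)
    (hg_Ioi.continuousAt (Ioi_mem_nhds hx))
  exact (hg.mono (by rw [uIcc_of_le hx.le]; exact Icc_subset_Ici_self)).intervalIntegrable

theorem stmt13_general (A : ℝ) (hA : 0 < A) (f : ℝ → ℝ)
    (hpos : ∀ t, 0 ≤ t → 0 ≤ f t)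
    (hcont : ContinuousOn f (Ici 0))
    (hineq : ∀ t, 0 ≤ t →
      f t ≤ f 0 + A * ∫ t' in (0 : ℝ)..t, Real.log (2 + f t') * f t') :
    ∀ t, 0 ≤ t → 2 + f t ≤ (2 + f 0) ^ Real.exp (A * t) := by
  intro t ht
  set g : ℝ → ℝ := fun s => log (2 + f s) * f s
  set F : ℝ → ℝ := fun s => f 0 + A * ∫ s in (0 : ℝ)..s, g s
  have hg : ContinuousOn g (Ici 0) :=
    ((continuousOn_const.add hcont).log fun s hs =>
      (by linarith [hpos s hs] : (0 : ℝ) < 2 + f s).ne').mul hcont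
  have hF0_le : ∀ s, 0 ≤ s → f 0 ≤ F s := fun s hs => le_add_of_nonneg_right <|
    mul_nonneg hA.le <| intervalIntegral.integral_nonneg hs fun x hx =>
      mul_nonneg (log_nonneg (by linarith [hpos x hx.1])) (hpos x hx.1)
  have hF_cont : ContinuousOn F (Icc 0 t) := by
    refine continuousOn_const.add (continuousOn_const.mul ?_)
    rw [← uIcc_of_le ht]
    exact intervalIntegral.continuousOn_primitive_interval
      (hg.mono fun x hx => hx.1.trans' (le_min le_rfl ht)).integrableOn_Icc
  have hu := le_rpow_exp_of_hasDerivAt_le_mul_log (u := fun s => 2 + F s)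
    (u' := fun s => A * g s)
    ht (continuousOn_const.add hF_cont)
    (fun s hs => by linarith [hF0_le s hs.1, hpos 0 le_rfl])
    (fun s hs => ((hasDerivAt_integral_of_continuousOn_Ici hg hs.1).const_mul A).const_add _
      |>.const_add 2)
    (fun s hs => mul_le_mul_of_nonneg_left
      (log_two_add_mul_le (hpos s hs.1.le) (hineq s hs.1.le)) hA.le)
  simp only [F, intervalIntegral.integral_same, mul_zero, add_zero, sub_zero] at hu
  linarith [hineq t ht]

/-- **nonlinear Gronwall lemma.** If `f : [0,∞) → [0,∞)` is continuous,
nondecreasing, and satisfies `f(t) ≤ f(0) + A ∫₀ᵗ log(2 + f) f` for all `t ≥ 0` with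
`A > 0`, then `2 + f(t) ≤ (2 + f(0))^{exp(At)}`. -/
theorem stmt13 (A : ℝ) (hA : 0 < A) (f : ℝ → ℝ)
    (hpos : ∀ t, 0 ≤ t → 0 ≤ f t)
    (hcont : ContinuousOn f (Ici 0))
    (hmono : MonotoneOn f (Ici 0))
    (hineq : ∀ t, 0 ≤ t →
      f t ≤ f 0 + A * ∫ t' in (0 : ℝ)..t, Real.log (2 + f t') * f t') :
    ∀ t, 0 ≤ t → 2 + f t ≤ (2 + f 0) ^ Real.exp (A * t) :=
  stmt13_general A hA f hpos hcont hineq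
end
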